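/- arXiv:math/0203286 — 7 statements merged into one kernel-verified Lean document; each statement's English description precedes it below -/
import Mathlib

section
/- For an N×N matrix, det_{1≤i,j≤N}(z_i^{N-j+1} - z_i^{-(N-j+1)}) = ∏_{j=1}^N (z_j - 1/z_j) · ∏_{1≤i<j≤N} (z_j - z_i)(1/(z_i z_j) - 1), for nonzero complex z_1,...,z_N. -/
/-!
With `t = z + z⁻¹` one has `z ^ (m + 1) - z ^ (-(m + 1)) = (z - z⁻¹) S_m(t)`, where `S_m` is the
rescaled Chebyshev polynomial of the second kind, monic of degree `m`. Pulling `z_i - z_i⁻¹` out of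
row `i` leaves the matrix `S_{N-1-j}(t_i)`, whose determinant equals the Vandermonde determinant
`∏_{i<j} (t_i - t_j)` since the `S_m` are monic of the right degrees; finally
`t_i - t_j = (z_j - z_i)((z_i z_j)⁻¹ - 1)`.
-/

open Finset Polynomial

namespace Polynomial.Chebyshev

variable {R : Type*} [CommRing R] [Nontrivial R]

theorem degree_S_natCast (n : ℕ) : (S R n).degree = n := by
  induction n using Nat.twoStepInduction with
  | zero => simp
  | one => simp
  | more n ih1 ih2 =>
    push_cast at ih2 ⊢
    have hX : (X * S R (n + 1)).degree = ↑(n + 2) := by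
      rw [X_mul, degree_mul_X, ih2]; norm_cast
    rw [S_add_two, degree_sub_eq_left_of_degree_lt, hX]
    · norm_cast
    · rw [hX, ih1]; norm_cast; omega

theorem natDegree_S_natCast (n : ℕ) : (S R n).natDegree = n :=
  natDegree_eq_of_degree_eq_some (degree_S_natCast n)

theorem monic_S_natCast (n : ℕ) : (S R n).Monic := by
  induction n using Nat.twoStepInduction with
  | zero => simp
  | one => simp
  | more n _ ih =>
    push_cast at ih ⊢
    refine S_add_two R n ▸ (monic_X.mul ih).sub_of_left ?_
    rw [X_mul, degree_mul_X, degree_S_natCast, ← Nat.cast_add_one, degree_S_natCast]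
    norm_cast; omega

variable {K : Type*} [Field K]

theorem sub_inv_mul_S_eval_add_inv {z : K} (hz : z ≠ 0) (n : ℤ) :
    (z - z⁻¹) * (S K n).eval (z + z⁻¹) = z ^ (n + 1) - z ^ (-(n + 1)) := by
  have step (m : ℤ) : (z + z⁻¹) * (z ^ m - z ^ (-m)) =
      (z ^ (m + 1) - z ^ (-(m + 1))) + (z ^ (m - 1) - z ^ (-(m - 1))) := by
    simp only [neg_add, neg_sub, zpow_add₀ hz, zpow_sub₀ hz, zpow_neg, zpow_one]
    field_simp
    ring
  induction n using Polynomial.Chebyshev.induct with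
  | zero => simp
  | one => simpa [mul_comm] using step 1
  | add_two n ih1 ih2 =>
    rw [S_add_two, eval_sub, eval_mul, eval_X]
    linear_combination (norm := ring_nf) (z + z⁻¹) * ih1 - ih2 + step (n + 2)
  | neg_add_one n ih1 ih2 =>
    rw [S_sub_one, eval_sub, eval_mul, eval_X]
    linear_combination (norm := ring_nf) (z + z⁻¹) * ih1 - ih2 + step (-n + 1)

end Polynomial.Chebyshev

theorem Fin.prod_Ioi_rev {M : Type*} [CommMonoid M] {n : ℕ} (f : Fin n → Fin n → M) :
    ∏ i, ∏ j ∈ Ioi i, f (rev j) (rev i) = ∏ i, ∏ j ∈ Ioi i, f i j := by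
  rw [prod_sigma', prod_sigma']
  refine prod_bij' (fun x _ => ⟨x.2.rev, x.1.rev⟩) (fun x _ => ⟨x.2.rev, x.1.rev⟩)
    ?_ ?_ (by simp) (by simp) (by simp)
  all_goals
    rintro ⟨a, b⟩ h
    simpa using h

theorem Matrix.det_eval_rev_eq_prod_sub {R : Type*} [CommRing R] {n : ℕ} (v : Fin n → R)
    (p : Fin n → R[X]) (h_deg : ∀ i, (p i).natDegree = i) (h_monic : ∀ i, (p i).Monic) :
    (Matrix.of fun i j => (p j.rev).eval (v i)).det = ∏ i, ∏ j ∈ Ioi i, (v i - v j) := by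
  rw [← det_submatrix_equiv_self Fin.revPerm]
  have : (Matrix.of fun i j => (p j.rev).eval (v i)).submatrix Fin.revPerm Fin.revPerm =
      Matrix.of fun i j => (p j).eval (v i.rev) := by
    ext i j; simp
  rw [this, ← det_eval_matrixOfPolynomials_eq_det_vandermonde _ p h_deg h_monic, det_vandermonde,
    Fin.prod_Ioi_rev fun i j => v i - v j]

theorem add_inv_sub_add_inv {K : Type*} [Field K] {a b : K} (ha : a ≠ 0) (hb : b ≠ 0) :
    a + a⁻¹ - (b + b⁻¹) = (b - a) * ((a * b)⁻¹ - 1) := by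
  field_simp
  ring

/-- Weyl denominator formula for the symplectic group:
`det(z_i^{N-j+1} - z_i^{-(N-j+1)}) = ∏_j (z_j - z_j⁻¹) ∏_{i<j} (z_j - z_i)((z_i z_j)⁻¹ - 1)`
for nonzero complex `z₁, …, z_N`. -/
theorem symplectic_weyl_denominator (N : ℕ) (z : Fin N → ℂ) (hz : ∀ i, z i ≠ 0) :
    Matrix.det (Matrix.of fun i j : Fin N =>
        z i ^ ((N : ℤ) - (j : ℕ)) - z i ^ (-((N : ℤ) - (j : ℕ)))) =
      (∏ j : Fin N, (z j - (z j)⁻¹)) *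
        ∏ i : Fin N, ∏ j ∈ Finset.Ioi i, ((z j - z i) * ((z i * z j)⁻¹ - 1)) := by
  let t i := z i + (z i)⁻¹
  let p (j : Fin N) := Chebyshev.S ℂ (j : ℕ)
  have factor_rows : (Matrix.of fun i j : Fin N =>
        z i ^ ((N : ℤ) - (j : ℕ)) - z i ^ (-((N : ℤ) - (j : ℕ)))) =
      Matrix.of fun i j => (z i - (z i)⁻¹) * (p j.rev).eval (t i) := by
    ext i j
    have : (N : ℤ) - (j : ℕ) = ((j.rev : ℕ) : ℤ) + 1 := by rw [Fin.val_rev]; omega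
    rw [Matrix.of_apply, Matrix.of_apply, Chebyshev.sub_inv_mul_S_eval_add_inv (hz i), this]
  rw [factor_rows]
  refine (Matrix.det_mul_column _ (Matrix.of fun i j => (p j.rev).eval (t i))).trans ?_
  rw [Matrix.det_eval_rev_eq_prod_sub t p (fun j => Chebyshev.natDegree_S_natCast j)
      (fun j => Chebyshev.monic_S_natCast j)]
  simp_rw [t, add_inv_sub_add_inv (hz _) (hz _)]
end

section
/- Let z_1(x,y) = π^{-1/2} e^{-(x-y)²}. Then for all real x_i < x_j, ∫_{y_1 < y_2} det( [z_1(x_i,y_1), z_1(x_i,y_2); z_1(x_j,y_1), z_1(x_j,y_2)] ) dy_1 dy_2 = Ψ((x_j - x_i)/√2), where Ψ(u) = (2/√π) ∫_0^u e^{-v²} dv. -/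
/-! Substituting `y₂ = y₁ + s`, the `y₁`-integral of each product of two kernels is a
Gaussian convolution, equal to the standard normal density `φ` at the difference of the
centres. With `d = x_j - x_i` the double integral becomes
`∫_{s>0} (φ(s - d) - φ(s + d)) ds = ∫_{-d}^{d} φ`, which is `Ψ(d/√2)` after the substitution
`t = √2 v`. -/

open MeasureTheory Real intervalIntegral Set ProbabilityTheory

section

variable {E : Type*} [NormedAddCommGroup E] [NormedSpace ℝ E]

theorem setIntegral_fst_lt_snd {f : ℝ × ℝ → E} (hf : Integrable f) :
    ∫ p in {p : ℝ × ℝ | p.1 < p.2}, f p = ∫ s in Ioi (0 : ℝ), ∫ y, f (y, y + s) := by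
  let e : ℝ × ℝ ≃ᵐ ℝ × ℝ := MeasurableEquiv.prodComm.trans (MeasurableEquiv.shearAddRight ℝ)
  have he : MeasurePreserving e := by
    rw [Measure.volume_eq_prod]; exact measurePreserving_prod_add_swap volume volume
  have hpre : e ⁻¹' {p | p.1 < p.2} = Ioi 0 ×ˢ univ := by
    ext p
    change p.2 < p.2 + p.1 ↔ p ∈ Ioi 0 ×ˢ univ
    simp
  rw [← he.setIntegral_preimage_emb e.measurableEmbedding, hpre, Measure.volume_eq_prod,
    setIntegral_prod _ ?_, Measure.restrict_univ]
  · rfl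
  · rw [← Measure.volume_eq_prod]
    exact ((he.integrable_comp_emb e.measurableEmbedding).2 hf).integrableOn

theorem setIntegral_Ioi_comp_add_right (f : ℝ → E) (a c : ℝ) :
    ∫ x in Ioi a, f (x + c) = ∫ x in Ioi (a + c), f x := by
  rw [← (measurePreserving_add_right volume c).setIntegral_preimage_emb
    (MeasurableEquiv.addRight c).measurableEmbedding f (Ioi (a + c)), preimage_add_const_Ioi,
    add_sub_cancel_right]

theorem integral_Ioi_comp_sub_sub_comp_add {f : ℝ → E} (hf : Integrable f) (d : ℝ) :
    ∫ s in Ioi (0 : ℝ), (f (s - d) - f (s + d)) = ∫ t in -d..d, f t := by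
  simp_rw [sub_eq_add_neg _ d]
  rw [integral_sub ((hf.comp_add_right _).integrableOn) ((hf.comp_add_right _).integrableOn),
    setIntegral_Ioi_comp_add_right, setIntegral_Ioi_comp_add_right, zero_add, zero_add,
    integral_Ioi_sub_Ioi' hf.integrableOn hf.integrableOn]

theorem Function.Even.intervalIntegral_neg_self {f : ℝ → E} (hf : Function.Even f)
    (hcont : Continuous f) (c : ℝ) :
    ∫ x in -c..c, f x = (2 : ℝ) • ∫ x in 0..c, f x := by
  have hneg : ∫ x in -c..0, f x = ∫ x in 0..c, f x := by
    simpa [hf _] using (integral_comp_neg (a := 0) (b := c) f).symm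
  rw [← integral_add_adjacent_intervals (hcont.intervalIntegrable _ _)
    (hcont.intervalIntegrable _ _), hneg, two_smul]

end

noncomputable def gaussianKernel (x y : ℝ) : ℝ := (√π)⁻¹ * exp (-(x - y) ^ 2)

lemma gaussianKernel_add_right (x y s : ℝ) :
    gaussianKernel x (y + s) = gaussianKernel (x - s) y := by
  simp only [gaussianKernel]; ring_nf

lemma gaussianKernel_mul_gaussianKernel (a b y : ℝ) :
    gaussianKernel a y * gaussianKernel b y =
      π⁻¹ * exp (-((a - b) ^ 2 / 2)) * exp (-2 * (y - (a + b) / 2) ^ 2) := by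
  have hπ : (√π)⁻¹ * (√π)⁻¹ = π⁻¹ := by rw [← mul_inv, mul_self_sqrt pi_pos.le]
  simp only [gaussianKernel]
  rw [mul_mul_mul_comm, hπ, mul_assoc, ← exp_add, ← exp_add]
  ring_nf

lemma integrable_gaussianKernel (x : ℝ) : Integrable (gaussianKernel x) := by
  have h := ((integrable_exp_neg_mul_sq one_pos).comp_sub_right x).const_mul (√π)⁻¹
  refine h.congr (ae_of_all _ fun y => ?_)
  simp only [gaussianKernel]; ring_nf

lemma integrable_gaussianKernel_det (a b : ℝ) :
    Integrable fun p : ℝ × ℝ => gaussianKernel a p.1 * gaussianKernel b p.2 -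
      gaussianKernel a p.2 * gaussianKernel b p.1 := by
  rw [Measure.volume_eq_prod]
  refine ((integrable_gaussianKernel a).mul_prod (integrable_gaussianKernel b)).sub ?_
  simpa only [mul_comm] using
    (integrable_gaussianKernel b).mul_prod (integrable_gaussianKernel a)

lemma integrable_gaussianKernel_mul_gaussianKernel (a b : ℝ) :
    Integrable (fun y => gaussianKernel a y * gaussianKernel b y) := by
  simp only [gaussianKernel_mul_gaussianKernel]
  exact ((integrable_exp_neg_mul_sq two_pos).comp_sub_right _).const_mul _

lemma integral_gaussianKernel_mul_gaussianKernel (a b : ℝ) :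
    ∫ y, gaussianKernel a y * gaussianKernel b y = gaussianPDFReal 0 1 (a - b) := by
  simp only [gaussianKernel_mul_gaussianKernel]
  rw [MeasureTheory.integral_const_mul, integral_sub_right_eq_self (fun y => exp (-2 * y ^ 2)),
    integral_gaussian, gaussianPDFReal]
  have h : π⁻¹ * √(π / 2) = (√(2 * π))⁻¹ := by
    rw [sqrt_div' _ zero_le_two, sqrt_mul' _ pi_pos.le]
    field_simp
    rw [sq_sqrt pi_pos.le]
  simp only [NNReal.coe_one, mul_one, sub_zero]
  rw [← h]; ring_nf

lemma even_gaussianPDFReal_zero (v : NNReal) : Function.Even (gaussianPDFReal 0 v) := fun x => by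
  simp [gaussianPDFReal]

lemma integral_gaussianKernel_det (a b s : ℝ) :
    ∫ y, (gaussianKernel a y * gaussianKernel b (y + s) -
        gaussianKernel a (y + s) * gaussianKernel b y) =
      gaussianPDFReal 0 1 (s - (b - a)) - gaussianPDFReal 0 1 (s + (b - a)) := by
  simp only [gaussianKernel_add_right]
  rw [integral_sub (integrable_gaussianKernel_mul_gaussianKernel _ _)
    (integrable_gaussianKernel_mul_gaussianKernel _ _),
    integral_gaussianKernel_mul_gaussianKernel, integral_gaussianKernel_mul_gaussianKernel,
    ← even_gaussianPDFReal_zero 1 (s + (b - a))]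
  ring_nf

lemma integral_gaussianPDFReal_neg_self (d : ℝ) :
    ∫ t in -d..d, gaussianPDFReal 0 1 t = 2 / √π * ∫ v in 0..d / √2, exp (-v ^ 2) := by
  have h2 : √2 ≠ 0 := by positivity
  have hscale : ∀ v, gaussianPDFReal 0 1 (√2 * v) = (√(2 * π))⁻¹ * exp (-v ^ 2) := fun v => by
    simp only [gaussianPDFReal, NNReal.coe_one, mul_one, sub_zero, mul_pow, sq_sqrt zero_le_two]
    ring_nf
  have heven : Function.Even fun v : ℝ => exp (-v ^ 2) := fun v => by simp
  calc ∫ t in -d..d, gaussianPDFReal 0 1 t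
      = √2 • ∫ v in -(d / √2)..d / √2, gaussianPDFReal 0 1 (√2 * v) := by
        rw [integral_comp_mul_left _ h2, mul_neg, mul_div_cancel₀ _ h2, smul_inv_smul₀ h2]
    _ = √2 * (√(2 * π))⁻¹ * ∫ v in -(d / √2)..d / √2, exp (-v ^ 2) := by
        simp only [hscale, intervalIntegral.integral_const_mul, smul_eq_mul]; ring
    _ = 2 / √π * ∫ v in 0..d / √2, exp (-v ^ 2) := by
        rw [heven.intervalIntegral_neg_self (by fun_prop), smul_eq_mul, sqrt_mul' _ pi_pos.le]
        field_simp

theorem debruijn_gaussian_entry_general (xi xj : ℝ) :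
    (∫ p : ℝ × ℝ in {p : ℝ × ℝ | p.1 < p.2},
        ((Real.sqrt π)⁻¹ * Real.exp (-(xi - p.1) ^ 2) *
            ((Real.sqrt π)⁻¹ * Real.exp (-(xj - p.2) ^ 2)) -
          (Real.sqrt π)⁻¹ * Real.exp (-(xi - p.2) ^ 2) *
            ((Real.sqrt π)⁻¹ * Real.exp (-(xj - p.1) ^ 2)))) =
      2 / Real.sqrt π * ∫ v in (0 : ℝ)..((xj - xi) / Real.sqrt 2), Real.exp (-v ^ 2) := by
  change ∫ p in {p : ℝ × ℝ | p.1 < p.2}, (gaussianKernel xi p.1 * gaussianKernel xj p.2 -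
      gaussianKernel xi p.2 * gaussianKernel xj p.1) = _
  rw [setIntegral_fst_lt_snd (integrable_gaussianKernel_det xi xj)]
  simp only [integral_gaussianKernel_det]
  rw [integral_Ioi_comp_sub_sub_comp_add (integrable_gaussianPDFReal 0 1),
    integral_gaussianPDFReal_neg_self]

/-- For the Gaussian kernel `z₁(x,y) = π^{-1/2} e^{-(x-y)²}` and `x_i < x_j`,
`∫_{y₁<y₂} det [z₁(xᵢ,y₁), z₁(xᵢ,y₂); z₁(xⱼ,y₁), z₁(xⱼ,y₂)] dy₁dy₂
  = Ψ((x_j - x_i)/√2)` with `Ψ(u) = (2/√π) ∫₀ᵘ e^{-v²} dv`. -/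
theorem debruijn_gaussian_entry (xi xj : ℝ) (h : xi < xj) :
    (∫ p : ℝ × ℝ in {p : ℝ × ℝ | p.1 < p.2},
        ((Real.sqrt π)⁻¹ * Real.exp (-(xi - p.1) ^ 2) *
            ((Real.sqrt π)⁻¹ * Real.exp (-(xj - p.2) ^ 2)) -
          (Real.sqrt π)⁻¹ * Real.exp (-(xi - p.2) ^ 2) *
            ((Real.sqrt π)⁻¹ * Real.exp (-(xj - p.1) ^ 2)))) =
      2 / Real.sqrt π * ∫ v in (0 : ℝ)..((xj - xi) / Real.sqrt 2), Real.exp (-v ^ 2) :=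
  debruijn_gaussian_entry_general xi xj
end

section
/- The function h_N(x) = ∏_{1≤i<j≤N}(x_j - x_i) is harmonic on ℝ^N, i.e., Δh_N = Σ_{i=1}^N ∂²h_N/∂x_i² = 0. -/
/-!
Write `h_N(x) = det V(x)` with `V(x)` the Vandermonde matrix; `x_i` occurs only in row `i`, as
`(1, x_i, …, x_i^(N-1))`. The determinant is linear in that row, so `∂²h_N/∂x_i²` is `det V` with
row `i` replaced by the second derivatives of the monomials at `x_i`. Those rows are the rows of
`V * D`, where `D` is the matrix of `d²/dx²` on polynomials of degree `< N`, and the Jacobi formula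
`∑ i, det (V with row i replaced by row i of V * D) = det V * tr D` (via the adjugate) gives
`Δh_N = h_N * tr D = 0`, because `d²/dx²` lowers degrees and so `D` has zero diagonal.
-/

open Finset Polynomial

namespace Matrix

variable {n R : Type*} [Fintype n] [DecidableEq n] [CommRing R]

theorem det_updateRow_eq_sum_mul_adjugate (A : Matrix n n R) (i : n) (b : n → R) :
    (A.updateRow i b).det = ∑ j, b j * A.adjugate j i := by
  rw [← cramer_transpose_apply, cramer_eq_adjugate_mulVec, ← adjugate_transpose, mulVec,
    dotProduct]
  simp only [transpose_apply, mul_comm]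

theorem sum_det_updateRow_mul (M A : Matrix n n R) :
    ∑ i, (M.updateRow i ((M * A) i)).det = M.det * A.trace := by
  simp_rw [det_updateRow_eq_sum_mul_adjugate]
  calc ∑ i, ∑ j, (M * A) i j * M.adjugate j i = (M * A * M.adjugate).trace := by
        simp [trace, mul_apply]
    _ = (M.adjugate * M * A).trace := by rw [trace_mul_comm, Matrix.mul_assoc]
    _ = M.det * A.trace := by rw [adjugate_mul, smul_mul, Matrix.one_mul, trace_smul, smul_eq_mul]

theorem det_updateRow_eval (A : Matrix n n R) (i : n) (p : n → R[X]) (u : R) :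
    (A.updateRow i fun j => (p j).eval u).det = (∑ j, C (A.adjugate j i) * p j).eval u := by
  simp [det_updateRow_eq_sum_mul_adjugate, eval_finsetSum, mul_comm]

theorem deriv_det_updateRow_eval {𝕜 : Type*} [NontriviallyNormedField 𝕜] (A : Matrix n n 𝕜)
    (i : n) (p : n → 𝕜[X]) (t : 𝕜) :
    deriv (fun u => (A.updateRow i fun j => (p j).eval u).det) t
      = (A.updateRow i fun j => (derivative (p j)).eval t).det := by
  simp only [det_updateRow_eval, Polynomial.deriv, derivative_sum, derivative_C_mul]

theorem vandermonde_update {N : ℕ} (x : Fin N → R) (i : Fin N) (u : R) :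
    vandermonde (Function.update x i u) = (vandermonde x).updateRow i fun j => u ^ (j : ℕ) := by
  ext k j
  by_cases h : k = i
  · subst h; simp [vandermonde_apply]
  · simp [vandermonde_apply, h]

theorem vandermonde_mul_of_coeff {N : ℕ} (x : Fin N → R) (p : Fin N → R[X])
    (hp : ∀ j, (p j).natDegree < N) (i j : Fin N) :
    (vandermonde x * of fun (m j : Fin N) => (p j).coeff m) i j = (p j).eval (x i) := by
  rw [eval_eq_sum_range' (hp j), ← Fin.sum_univ_eq_sum_range (fun m => (p j).coeff m * x i ^ m)]
  simp [mul_apply, vandermonde_apply, mul_comm]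

theorem sum_det_updateRow_vandermonde_eval {N : ℕ} (x : Fin N → R) (p : Fin N → R[X])
    (hp : ∀ j, (p j).natDegree < N) :
    ∑ i, ((vandermonde x).updateRow i fun j => (p j).eval (x i)).det
      = (vandermonde x).det * ∑ j, (p j).coeff j := by
  have rows : ∀ i, (fun j => (p j).eval (x i))
      = (vandermonde x * of fun (m j : Fin N) => (p j).coeff m) i :=
    fun i => funext fun j => (vandermonde_mul_of_coeff x p hp i j).symm
  simp_rw [rows, sum_det_updateRow_mul]
  rfl

end Matrix

namespace Polynomial

variable {R : Type*} [CommRing R]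

theorem natDegree_derivative_derivative_X_pow_le (j : ℕ) :
    (derivative (derivative (X ^ j : R[X]))).natDegree ≤ j :=
  (natDegree_derivative_le _).trans <| tsub_le_self.trans <|
    (natDegree_derivative_le _).trans <| tsub_le_self.trans (natDegree_X_pow_le j)

theorem coeff_derivative_derivative_X_pow_self (j : ℕ) :
    (derivative (derivative (X ^ j : R[X]))).coeff j = 0 := by
  simp [coeff_derivative, coeff_X_pow, show j + 1 + 1 ≠ j by omega]

end Polynomial

open Matrix

/-- The Vandermonde product `h_N(x) = ∏_{i<j} (x_j - x_i)` is harmonic on `ℝ^N`: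
the sum of its second partial derivatives vanishes everywhere. -/
theorem vandermonde_harmonic (N : ℕ) (x : Fin N → ℝ) :
    (∑ i : Fin N,
        deriv (fun s : ℝ =>
          deriv (fun u : ℝ =>
            ∏ k : Fin N, ∏ l ∈ Finset.Ioi k,
              (Function.update x i u l - Function.update x i u k)) s) (x i)) = 0 := by
  have h_eq_det : ∀ i u, ∏ k : Fin N, ∏ l ∈ Finset.Ioi k,
      (Function.update x i u l - Function.update x i u k)
      = ((vandermonde x).updateRow i fun j => (X ^ (j : ℕ) : ℝ[X]).eval u).det := by
    intro i u
    simp [← det_vandermonde, vandermonde_update]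
  simp_rw [h_eq_det, deriv_det_updateRow_eval]
  rw [sum_det_updateRow_vandermonde_eval]
  · simp [coeff_derivative_derivative_X_pow_self]
  · exact fun j => (natDegree_derivative_derivative_X_pow_le j).trans_lt j.isLt
end

section
/- The function ĥ_N(x) = ∏_{1≤i<j≤N}(x_j² - x_i²) · ∏_{i=1}^N x_i is harmonic on ℝ^N, i.e., Δĥ_N = 0. -/
/-!
Writing `ĥ_N = ∏ x_j · ∏_{i<j} (x_j² - x_i²)` as the alternant `det (x_j ^ (2k+1))` (a row-scaled
Vandermonde determinant in the `x_j²`), the Laplacian acts monomial by monomial: for any exponent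
vector `e`, `Δ det (x_j ^ e_k) = ∑_k e_k (e_k - 1) det (x_j ^ e'_k)` with `e'` equal to `e` except
that `e_k` is lowered by two. For `e_k = 2k + 1` the term `k = 0` has coefficient `0`, and for
`k > 0` the lowered exponent `2k - 1` repeats column `k - 1`, so every term vanishes.
-/

open Finset MvPolynomial Matrix Function

section

variable {𝕜 σ : Type*} [NontriviallyNormedField 𝕜] [DecidableEq σ]

theorem hasDerivAt_eval_update (p : MvPolynomial σ 𝕜) (x : σ → 𝕜) (i : σ) (s : 𝕜) :
    HasDerivAt (fun u => eval (update x i u) p) (eval (update x i s) (pderiv i p)) s := by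
  induction p using MvPolynomial.induction_on with
  | C a => simpa using hasDerivAt_const s a
  | add p q hp hq => simpa only [map_add] using hp.fun_add hq
  | mul_X p j hp =>
    rcases eq_or_ne j i with rfl | hji
    · simpa [pderiv_mul, add_comm, mul_comm] using hp.fun_mul (hasDerivAt_id' s)
    · simpa [pderiv_mul, pderiv_X_of_ne hji, update_of_ne hji, mul_comm] using
        hp.fun_mul (hasDerivAt_const s (x j))

theorem deriv_eval_update (p : MvPolynomial σ 𝕜) (x : σ → 𝕜) (i : σ) :
    deriv (fun u => eval (update x i u) p) = fun s => eval (update x i s) (pderiv i p) := by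
  ext s
  exact (hasDerivAt_eval_update p x i s).deriv

end

section

variable {R σ ι : Type*} [CommRing R] [Fintype ι] [DecidableEq ι]

theorem pderiv_prod_X_pow {v : ι → σ} (hv : Injective v) (e : ι → ℕ) (k : ι) :
    pderiv (v k) (∏ k', (X (v k') : MvPolynomial σ R) ^ e k') =
      (e k : MvPolynomial σ R) * ∏ k', X (v k') ^ update e k (e k - 1) k' := by
  have hrest : pderiv (v k) (∏ k' ∈ {k}ᶜ, (X (v k') : MvPolynomial σ R) ^ e k') = 0 := by
    refine Finset.prod_induction _ (fun p => pderiv (v k) p = 0) (fun p q hp hq => ?_)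
      (by simp) fun k' hk' => ?_
    · simp [hp, hq]
    · have hne : v k' ≠ v k := hv.ne (by simpa using hk')
      simp [pderiv_X_of_ne hne]
  rw [Fintype.prod_eq_mul_prod_compl k, Fintype.prod_eq_mul_prod_compl k, pderiv_mul, hrest,
    pderiv_pow, pderiv_X_self, update_self]
  have hcompl : ∏ k' ∈ {k}ᶜ, (X (v k') : MvPolynomial σ R) ^ update e k (e k - 1) k' =
      ∏ k' ∈ {k}ᶜ, X (v k') ^ e k' :=
    prod_congr rfl fun k' hk' => by rw [update_of_ne (by simpa using hk')]
  rw [hcompl]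
  ring

theorem sum_pderiv_pderiv_prod_X_pow (π : Equiv.Perm ι) (e : ι → ℕ) :
    ∑ j, pderiv j (pderiv j (∏ k, (X (π k) : MvPolynomial ι R) ^ e k)) =
      ∑ k, ((e k * (e k - 1) : ℕ) : MvPolynomial ι R) *
        ∏ k', X (π k') ^ update e k (e k - 2) k' := by
  rw [← Equiv.sum_comp π]
  refine sum_congr rfl fun k _ => ?_
  rw [pderiv_prod_X_pow π.injective, pderiv_mul, pderiv_prod_X_pow π.injective]
  simp only [Derivation.map_natCast, zero_mul, zero_add, update_self, update_idem, Nat.sub_sub,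
    Nat.cast_mul]
  ring

noncomputable def alternant (R : Type*) [CommRing R] (e : ι → ℕ) : MvPolynomial ι R :=
  (Matrix.of fun j k => (X j : MvPolynomial ι R) ^ e k).det

theorem eval_alternant (e : ι → ℕ) (y : ι → R) :
    eval y (alternant R e) = (Matrix.of fun j k => y j ^ e k).det := by
  rw [alternant, RingHom.map_det]
  congr 1
  ext j k
  simp

theorem alternant_eq_zero {e : ι → ℕ} {a b : ι} (hab : a ≠ b) (he : e a = e b) :
    alternant R e = 0 :=
  det_zero_of_column_eq hab fun j => by simp [he]

theorem sum_pderiv_pderiv_alternant (e : ι → ℕ) :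
    ∑ j : ι, pderiv j (pderiv j (alternant R e)) =
      ∑ k, ((e k * (e k - 1) : ℕ) : MvPolynomial ι R) * alternant R (update e k (e k - 2)) := by
  simp only [alternant, det_apply, of_apply, map_sum, Units.smul_def, map_zsmul, mul_sum]
  rw [sum_comm]
  conv_rhs => rw [sum_comm]
  refine sum_congr rfl fun π _ => ?_
  simp only [← smul_sum, sum_pderiv_pderiv_prod_X_pow, mul_smul_comm]

theorem det_of_pow_two_mul_add_one {n : ℕ} (v : Fin n → R) :
    (Matrix.of fun j k : Fin n => v j ^ (2 * (k : ℕ) + 1)).det =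
      (∏ k : Fin n, ∏ l ∈ Ioi k, (v l ^ 2 - v k ^ 2)) * ∏ k, v k := by
  have : (Matrix.of fun j k : Fin n => v j ^ (2 * (k : ℕ) + 1)) =
      diagonal v * vandermonde (fun j => v j ^ 2) := by
    ext j k
    simp [vandermonde_apply, pow_succ', pow_mul]
  rw [this, det_mul, det_vandermonde, det_diagonal, mul_comm]

theorem sum_pderiv_pderiv_alternant_two_mul_add_one (n : ℕ) :
    ∑ j : Fin n, pderiv j (pderiv j (alternant R fun k : Fin n => 2 * (k : ℕ) + 1)) = 0 := by
  rw [sum_pderiv_pderiv_alternant]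
  refine sum_eq_zero fun k _ => ?_
  rcases Nat.eq_zero_or_pos k with hk | hk
  · simp [hk]
  · have hprev : (⟨k - 1, by omega⟩ : Fin n) ≠ k := Fin.ne_of_val_ne (by dsimp only; omega)
    refine mul_eq_zero_of_right _ (alternant_eq_zero hprev ?_)
    simp only [update_of_ne hprev, update_self]
    omega

end

/-- The type-C Vandermonde `ĥ_N(x) = ∏_{i<j}(x_j² - x_i²) ∏_i x_i` is harmonic on `ℝ^N`. -/
theorem typeC_vandermonde_harmonic (N : ℕ) (x : Fin N → ℝ) :
    (∑ i : Fin N,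
        deriv (fun s : ℝ =>
          deriv (fun u : ℝ =>
            (∏ k : Fin N, ∏ l ∈ Finset.Ioi k,
              (Function.update x i u l ^ 2 - Function.update x i u k ^ 2)) *
            ∏ k : Fin N, Function.update x i u k) s) (x i)) = 0 := by
  have hP : ∀ y : Fin N → ℝ, (∏ k : Fin N, ∏ l ∈ Ioi k, (y l ^ 2 - y k ^ 2)) * ∏ k, y k =
      eval y (alternant ℝ fun k : Fin N => 2 * (k : ℕ) + 1) := fun y => by
    rw [eval_alternant, det_of_pow_two_mul_add_one]
  simp only [hP, deriv_eval_update, update_eq_self]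
  rw [← map_sum, sum_pderiv_pderiv_alternant_two_mul_add_one, map_zero]
end

section
/- For positive integers m, and integers u_1 < u_2 < ... < u_N, v_1 < v_2 < ... < v_N with u_i + m + v_j even for all i,j, the number of N-tuples of nonintersecting lattice paths of simple random walks of length m, the i-th path running from u_i to v_i, equals det_{1≤i,j≤N}( C(m, (m + u_j - v_i)/2) ), where C(n,k) is the binomial coefficient (interpreted as 0 when (m+u_j-v_i)/2 is not an integer in [0,m]). -/
/-!
Expanding the determinant, the right-hand side is the signed count of pairs `(σ, x)` where `x` is
a family of paths, the `i`-th running from `u i` to `v (σ i)`; the entry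
`C(m, (m + u - v) / 2)` counts the paths from `u` to `v`, which have `(m + u - v) / 2` down-steps.
Among families in which two paths meet, exchanging the tails of two paths that meet at the first
collision time is an involution that multiplies `σ` by a transposition, so these families
cancel. In a family without collision, two paths at even distance cannot cross without meeting,
so the paths keep their initial order and `σ = 1`.
-/

open Finset Function Equiv

namespace LGV

section SignReversingInvolution

variable {ι E : Type*} [Fintype ι] [DecidableEq ι] [DecidableEq E]

def signedCount (v w : ι → E) : ℤ :=
  ∑ σ ∈ univ.filter fun σ : Perm ι => w = v ∘ σ, (Perm.sign σ : ℤ)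

lemma signedCount_comp_of_sign_eq_neg_one (v w : ι → E) {τ : Perm ι}
    (hτ : Perm.sign τ = -1) : signedCount v (w ∘ τ) = -signedCount v w := by
  simp only [signedCount, sum_filter, ← sum_neg_distrib]
  rw [← Equiv.sum_comp (Equiv.mulRight τ)]
  refine sum_congr rfl fun σ _ => ?_
  have hcomp : w ∘ τ = v ∘ σ ∘ τ ↔ w = v ∘ σ := by
    rw [← comp_assoc]
    exact τ.surjective.injective_comp_right.eq_iff
  simp [hcomp, hτ, apply_ite]

lemma signedCount_eq_ite {v w : ι → E} (hw : ∀ σ : Perm ι, w = v ∘ σ → σ = 1) :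
    signedCount v w = if w = v then 1 else 0 := by
  rw [signedCount, sum_filter, Fintype.sum_eq_single 1 fun σ hσ => if_neg (hσ ∘ hw σ)]
  simp

lemma sum_sign_mul_card_eq_sum_signedCount {X : Type*} [Fintype X] (f : X → ι → E)
    (v : ι → E) :
    ∑ σ : Perm ι, (Perm.sign σ : ℤ) * #{x | f x = v ∘ σ} =
      ∑ x, signedCount v (f x) := by
  simp only [signedCount, natCast_card_filter, mul_sum, sum_filter, mul_ite, mul_one, mul_zero]
  exact sum_comm

theorem sum_sign_mul_card_eq_card_of_involution {X : Type*} [Fintype X]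
    (f : X → ι → E) (v : ι → E) (good : X → Prop) [DecidablePred good]
    (g : X → X) (τ : X → Perm ι)
    (hg_good : ∀ x, ¬ good x → ¬ good (g x)) (hg_invol : ∀ x, ¬ good x → g (g x) = x)
    (hτ : ∀ x, ¬ good x → Perm.sign (τ x) = -1)
    (hf : ∀ x, ¬ good x → f (g x) = f x ∘ τ x)
    (hgood : ∀ x, good x → ∀ σ : Perm ι, f x = v ∘ σ → σ = 1) :
    ∑ σ : Perm ι, (Perm.sign σ : ℤ) * #{x | f x = v ∘ σ} = #{x | good x ∧ f x = v} := by
  have hbad : ∑ x with ¬ good x, signedCount v (f x) = 0 := by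
    have hneg : ∀ x, ¬ good x → signedCount v (f (g x)) = -signedCount v (f x) :=
      fun x hx => by rw [hf x hx, signedCount_comp_of_sign_eq_neg_one _ _ (hτ x hx)]
    refine sum_involution (fun x _ => g x) ?_ ?_ ?_ ?_ <;>
      simp only [mem_filter, mem_univ, true_and]
    · intro x hx
      rw [hneg x hx, add_neg_cancel]
    · intro x hx hne hfix
      have := hneg x hx
      rw [hfix] at this
      omega
    · exact hg_good
    · exact hg_invol
  rw [sum_sign_mul_card_eq_sum_signedCount, ← sum_filter_add_sum_filter_not univ good, hbad,
    add_zero, natCast_card_filter, sum_filter]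
  refine sum_congr rfl fun x _ => ?_
  by_cases hx : good x
  · simp [hx, signedCount_eq_ite (hgood x hx)]
  · simp [hx]

end SignReversingInvolution

section CollidingSwap

variable {α β : Type*} [DecidableEq α]

open scoped Classical in
noncomputable def collidingSwap (w : α → β) : Perm α :=
  if h : ∃ p : α × α, w p.1 = w p.2 ∧ p.1 ≠ p.2 then swap h.choose.1 h.choose.2 else 1

lemma comp_collidingSwap (w : α → β) : w ∘ collidingSwap w = w := by
  unfold collidingSwap
  split_ifs with h
  · obtain ⟨hw, -⟩ := h.choose_spec
    ext i
    simp only [comp_apply, swap_apply_def]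
    split_ifs <;> simp_all
  · rfl

lemma collidingSwap_involutive (w : α → β) : Involutive (collidingSwap w) := by
  unfold collidingSwap
  split_ifs
  exacts [swap_apply_self _ _, fun _ => rfl]

lemma sign_collidingSwap [Fintype α] {w : α → β} (hw : ¬Injective w) :
    Perm.sign (collidingSwap w) = -1 := by
  obtain ⟨i, j, hij, hne⟩ := not_injective_iff.1 hw
  have h : ∃ p : α × α, w p.1 = w p.2 ∧ p.1 ≠ p.2 := ⟨(i, j), hij, hne⟩
  rw [collidingSwap, dif_pos h, Perm.sign_swap h.choose_spec.2]

end CollidingSwap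

section Walks

variable {m : ℕ}

/-- A path of length `m` is encoded by the set `D` of times at which it steps down. -/
def step (D : Finset (Fin m)) (t : Fin m) : ℤ := if t ∈ D then -1 else 1

def walk (a : ℤ) (D : Finset (Fin m)) (k : Fin (m + 1)) : ℤ := a + Fin.partialSum (step D) k

@[simp] lemma walk_zero (a : ℤ) (D : Finset (Fin m)) : walk a D 0 = a := by simp [walk]

lemma walk_succ (a : ℤ) (D : Finset (Fin m)) (t : Fin m) :
    walk a D t.succ = walk a D t.castSucc + step D t := by
  simp [walk, Fin.partialSum_succ, add_assoc]

lemma sum_step (D : Finset (Fin m)) : ∑ t, step D t = m - 2 * #D := by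
  have h : ∀ t, step D t = 1 - 2 * if t ∈ D then 1 else 0 := fun t => by
    unfold step
    split_ifs <;> norm_num
  simp [h, sum_sub_distrib, mul_comm]

lemma walk_last (a : ℤ) (D : Finset (Fin m)) : walk a D (Fin.last m) = a + m - 2 * #D := by
  have : Fin.partialSum (step D) (Fin.last m) = ∑ t, step D t := by
    simp [Fin.partialSum, List.take_of_length_le, List.sum_ofFn]
  rw [walk, this, sum_step]
  ring

lemma card_filter_card_eq {α : Type*} [Fintype α] [DecidableEq α] (k : ℕ) :
    #{s : Finset α | #s = k} = (Fintype.card α).choose k := by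
  rw [← card_univ, ← card_powersetCard]
  congr 1
  ext s
  simp

lemma card_walk_last_eq (a b : ℤ) (hab : Even (a + m + b)) :
    (#{D : Finset (Fin m) | walk a D (Fin.last m) = b} : ℤ) =
      if 0 ≤ (m : ℤ) + a - b then (m.choose (((m : ℤ) + a - b) / 2).toNat : ℤ) else 0 := by
  obtain ⟨c, hc⟩ := hab
  simp only [walk_last]
  split_ifs with hd
  · have : ∀ D : Finset (Fin m), a + m - 2 * #D = b ↔ #D = (((m : ℤ) + a - b) / 2).toNat :=
      fun D => by omega
    simp only [this, card_filter_card_eq, Fintype.card_fin]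
  · have : ∀ D : Finset (Fin m), a + m - 2 * #D ≠ b := fun D => by omega
    simp [this]

lemma step_eq_neg_one_or_one (D : Finset (Fin m)) (t : Fin m) : step D t = -1 ∨ step D t = 1 := by
  unfold step; split_ifs <;> simp

lemma abs_walk_succ_sub (a : ℤ) (D : Finset (Fin m)) (t : Fin m) :
    |walk a D t.succ - walk a D t.castSucc| = 1 := by
  rw [walk_succ, add_sub_cancel_left]
  rcases step_eq_neg_one_or_one D t with h | h <;> simp [h]

def downSteps (p : Fin (m + 1) → ℤ) : Finset (Fin m) := {t | p t.succ < p t.castSucc}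

lemma walk_downSteps {a : ℤ} {p : Fin (m + 1) → ℤ} (h0 : p 0 = a)
    (hstep : ∀ t : Fin m, |p t.succ - p t.castSucc| = 1) : walk a (downSteps p) = p := by
  funext k
  induction k using Fin.induction with
  | zero => simp [h0]
  | succ t ih =>
    have := (abs_eq zero_le_one).1 (hstep t)
    rw [walk_succ, ih, step, downSteps]
    split_ifs with ht <;> simp only [mem_filter, mem_univ, true_and] at ht <;> omega

lemma downSteps_walk (a : ℤ) (D : Finset (Fin m)) : downSteps (walk a D) = D := by
  ext t
  simp only [downSteps, mem_filter, mem_univ, true_and, walk_succ, step]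
  split_ifs with ht <;> simp [ht]

/-- The gap between the two paths stays even, so it cannot change sign without vanishing. -/
lemma walk_lt_walk {a b : ℤ} {D E : Finset (Fin m)} (hab : a < b) (hpar : Even (b - a))
    (hne : ∀ k, walk a D k ≠ walk b E k) (k : Fin (m + 1)) : walk a D k < walk b E k := by
  suffices walk a D k < walk b E k ∧ Even (walk b E k - walk a D k) from this.1
  induction k using Fin.induction with
  | zero => simpa using ⟨hab, hpar⟩
  | succ t ih =>
    have hmeet := hne t.succ
    rw [Int.even_iff] at ih ⊢
    rw [walk_succ, walk_succ] at hmeet ⊢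
    rcases step_eq_neg_one_or_one D t with h₁ | h₁ <;>
      rcases step_eq_neg_one_or_one E t with h₂ | h₂ <;> omega

section Splice

def splice (k₀ : Fin (m + 1)) (D E : Finset (Fin m)) : Finset (Fin m) :=
  {t ∈ D | t.castSucc < k₀} ∪ {t ∈ E | k₀ ≤ t.castSucc}

variable {k₀ : Fin (m + 1)} {D E : Finset (Fin m)}

lemma mem_splice {t : Fin m} :
    t ∈ splice k₀ D E ↔ if t.castSucc < k₀ then t ∈ D else t ∈ E := by
  by_cases h : t.castSucc < k₀
  · simp [splice, h, not_le.2 h]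
  · simp [splice, h, not_lt.1 h]

lemma step_splice (t : Fin m) :
    step (splice k₀ D E) t = if t.castSucc < k₀ then step D t else step E t := by
  simp only [step, mem_splice]
  split_ifs <;> rfl

lemma walk_splice_of_le (a : ℤ) {k : Fin (m + 1)} (hk : k ≤ k₀) :
    walk a (splice k₀ D E) k = walk a D k := by
  induction k using Fin.induction with
  | zero => simp
  | succ t ih =>
    have ht : t.castSucc < k₀ := Fin.castSucc_lt_iff_succ_le.2 hk
    rw [walk_succ, walk_succ, ih ht.le, step_splice, if_pos ht]

lemma walk_splice_of_ge {a b : ℤ} (hmeet : walk a D k₀ = walk b E k₀) {k : Fin (m + 1)}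
    (hk : k₀ ≤ k) : walk a (splice k₀ D E) k = walk b E k := by
  induction k using Fin.induction with
  | zero =>
    obtain rfl := Fin.le_zero_iff.1 hk
    simpa using hmeet
  | succ t ih =>
    rcases hk.eq_or_lt with rfl | hlt
    · rw [walk_splice_of_le a le_rfl, hmeet]
    · have ht : k₀ ≤ t.castSucc := Fin.le_castSucc_iff.2 hlt
      rw [walk_succ, walk_succ, ih ht, step_splice, if_neg (not_lt.2 ht)]

end Splice

end Walks

section Tuples

variable {m N : ℕ} (u : Fin N → ℤ)

def positions (x : Fin N → Finset (Fin m)) (k : Fin (m + 1)) : Fin N → ℤ :=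
  fun i => walk (u i) (x i) k

def Nonintersecting (x : Fin N → Finset (Fin m)) : Prop := ∀ k, Injective (positions u x k)

instance : DecidablePred (Nonintersecting (m := m) u) := fun x => by
  unfold Nonintersecting
  infer_instance

def collisionTimes (x : Fin N → Finset (Fin m)) : Finset (Fin (m + 1)) :=
  {k | ¬Injective (positions u x k)}

noncomputable def firstCollision (x : Fin N → Finset (Fin m)) : Fin (m + 1) :=
  if h : (collisionTimes u x).Nonempty then (collisionTimes u x).min' h else 0

def swapTails (k₀ : Fin (m + 1)) (τ : Perm (Fin N)) (x : Fin N → Finset (Fin m)) :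
    Fin N → Finset (Fin m) :=
  fun i => splice k₀ (x i) (x (τ i))

noncomputable def collisionSwap (x : Fin N → Finset (Fin m)) : Perm (Fin N) :=
  collidingSwap (positions u x (firstCollision u x))

/-- The colliding pair depends only on the positions at the first collision time, which the swap
does not change: this is what makes `tailSwap` an involution. -/
noncomputable def tailSwap (x : Fin N → Finset (Fin m)) : Fin N → Finset (Fin m) :=
  swapTails (firstCollision u x) (collisionSwap u x) x

variable {u} {k₀ : Fin (m + 1)}

lemma swapTails_swapTails {τ : Perm (Fin N)} (hτ : Involutive τ) (x : Fin N → Finset (Fin m)) :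
    swapTails k₀ τ (swapTails k₀ τ x) = x := by
  funext i
  ext t
  by_cases ht : t.castSucc < k₀ <;> simp [swapTails, mem_splice, ht, hτ i]

lemma positions_swapTails_of_le {τ : Perm (Fin N)} (x : Fin N → Finset (Fin m))
    {k : Fin (m + 1)} (hk : k ≤ k₀) : positions u (swapTails k₀ τ x) k = positions u x k :=
  funext fun i => walk_splice_of_le (u i) hk

lemma positions_swapTails_of_ge {τ : Perm (Fin N)} {x : Fin N → Finset (Fin m)}
    (hτ : positions u x k₀ ∘ τ = positions u x k₀) {k : Fin (m + 1)} (hk : k₀ ≤ k) :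
    positions u (swapTails k₀ τ x) k = positions u x k ∘ τ :=
  funext fun i => walk_splice_of_ge (congrFun hτ i).symm hk

lemma positions_tailSwap_of_le (x : Fin N → Finset (Fin m)) {k : Fin (m + 1)}
    (hk : k ≤ firstCollision u x) : positions u (tailSwap u x) k = positions u x k :=
  positions_swapTails_of_le x hk

lemma positions_tailSwap_of_ge (x : Fin N → Finset (Fin m)) {k : Fin (m + 1)}
    (hk : firstCollision u x ≤ k) :
    positions u (tailSwap u x) k = positions u x k ∘ collisionSwap u x :=
  positions_swapTails_of_ge (comp_collidingSwap _) hk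

/-- From the first collision on, the tail swap only permutes the paths. -/
lemma collisionTimes_tailSwap (x : Fin N → Finset (Fin m)) :
    collisionTimes u (tailSwap u x) = collisionTimes u x := by
  ext k
  simp only [collisionTimes, mem_filter, mem_univ, true_and]
  rcases le_total k (firstCollision u x) with hk | hk
  · rw [positions_tailSwap_of_le x hk]
  · rw [positions_tailSwap_of_ge x hk, EquivLike.injective_comp]

lemma firstCollision_tailSwap (x : Fin N → Finset (Fin m)) :
    firstCollision u (tailSwap u x) = firstCollision u x := by
  simp only [firstCollision, collisionTimes_tailSwap]

lemma tailSwap_tailSwap (x : Fin N → Finset (Fin m)) : tailSwap u (tailSwap u x) = x := by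
  rw [tailSwap, collisionSwap, firstCollision_tailSwap, positions_tailSwap_of_le x le_rfl]
  exact swapTails_swapTails (collidingSwap_involutive _) x

lemma nonintersecting_iff_collisionTimes_eq_empty (x : Fin N → Finset (Fin m)) :
    Nonintersecting u x ↔ collisionTimes u x = ∅ := by
  simp [Nonintersecting, collisionTimes, filter_eq_empty_iff]

lemma nonintersecting_tailSwap_iff (x : Fin N → Finset (Fin m)) :
    Nonintersecting u (tailSwap u x) ↔ Nonintersecting u x := by
  simp only [nonintersecting_iff_collisionTimes_eq_empty, collisionTimes_tailSwap]

lemma sign_collisionSwap {x : Fin N → Finset (Fin m)} (hx : ¬Nonintersecting u x) :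
    Perm.sign (collisionSwap u x) = -1 := by
  rw [nonintersecting_iff_collisionTimes_eq_empty, ← ne_eq, ← nonempty_iff_ne_empty] at hx
  have hmem : firstCollision u x ∈ collisionTimes u x := by
    rw [firstCollision, dif_pos hx]
    exact min'_mem _ hx
  exact sign_collidingSwap (mem_filter.1 hmem).2

lemma strictMono_positions (hu : StrictMono u) (hpar : ∀ i j, Even (u j - u i))
    {x : Fin N → Finset (Fin m)} (hx : Nonintersecting u x) (k : Fin (m + 1)) :
    StrictMono (positions u x k) := fun i j hij =>
  walk_lt_walk (hu hij) (hpar i j) (fun k hk => hij.ne (hx k hk)) k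

lemma eq_one_of_nonintersecting {v : Fin N → ℤ} (hu : StrictMono u) (hv : StrictMono v)
    (hpar : ∀ i j, Even (u j - u i)) {x : Fin N → Finset (Fin m)} (hx : Nonintersecting u x)
    {σ : Perm (Fin N)} (hσ : positions u x (Fin.last m) = v ∘ σ) : σ = 1 := by
  have hvσ : StrictMono (v ∘ σ) := hσ ▸ strictMono_positions hu hpar hx (Fin.last m)
  have hσ_mono : StrictMono σ := fun i j hij => hv.lt_iff_lt.1 (hvσ hij)
  exact Equiv.ext fun i => hσ_mono.apply_eq

lemma card_filter_positions_last_eq_prod (w : Fin N → ℤ) :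
    #{x : Fin N → Finset (Fin m) | positions u x (Fin.last m) = w} =
      ∏ i, #{D : Finset (Fin m) | walk (u i) D (Fin.last m) = w i} := by
  rw [← Fintype.card_piFinset]
  congr 1
  ext x
  simp [Fintype.mem_piFinset, funext_iff, positions]

lemma card_nonintersecting (v : Fin N → ℤ) (hu : StrictMono u)
    (hpar : ∀ i j, Even (u j - u i)) :
    Nat.card {S : Fin N → Fin (m + 1) → ℤ //
        (∀ i, S i 0 = u i) ∧
        (∀ i, S i (Fin.last m) = v i) ∧
        (∀ i, ∀ k : Fin m, |S i k.succ - S i k.castSucc| = 1) ∧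
        (∀ k : Fin (m + 1), StrictMono fun i => S i k)} =
      #{x : Fin N → Finset (Fin m) | Nonintersecting u x ∧ positions u x (Fin.last m) = v} := by
  rw [← Nat.card_eq_finsetCard]
  symm
  refine Nat.card_congr
    { toFun := fun x => ⟨fun i => walk (u i) (x.1 i), fun i => walk_zero _ _,
        fun i => congrFun (mem_filter.1 x.2).2.2 i, fun i => abs_walk_succ_sub _ _,
        strictMono_positions hu hpar (mem_filter.1 x.2).2.1⟩
      invFun := fun S => ⟨fun i => downSteps (S.1 i), ?_⟩
      left_inv := fun x => Subtype.ext (funext fun i => downSteps_walk _ _)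
      right_inv := fun S => Subtype.ext (funext fun i => walk_downSteps (S.2.1 i) (S.2.2.2.1 i)) }
  have hpos : ∀ k, positions u (fun i => downSteps (S.1 i)) k = fun i => S.1 i k := fun k =>
    funext fun i => congrFun (walk_downSteps (S.2.1 i) (S.2.2.2.1 i)) k
  refine mem_filter.2 ⟨mem_univ _, fun k => ?_, ?_⟩
  · rw [hpos]
    exact (S.2.2.2.2 k).injective
  · rw [hpos]
    exact funext S.2.2.1

end Tuples

end LGV

theorem lgv_vicious_walkers_general (N m : ℕ) (u v : Fin N → ℤ)
    (hu : StrictMono u) (hv : StrictMono v)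
    (hpar : ∀ i j : Fin N, Even (u i + m + v j)) :
    (Nat.card {S : Fin N → Fin (m + 1) → ℤ //
        (∀ i, S i 0 = u i) ∧
        (∀ i, S i (Fin.last m) = v i) ∧
        (∀ i, ∀ k : Fin m, |S i k.succ - S i k.castSucc| = 1) ∧
        (∀ k : Fin (m + 1), StrictMono fun i => S i k)} : ℤ) =
      Matrix.det (Matrix.of fun i j : Fin N =>
        if 0 ≤ (m : ℤ) + u j - v i then
          (m.choose (((m : ℤ) + u j - v i) / 2).toNat : ℤ)
        else 0) := by
  have hpar' : ∀ i j, Even (u j - u i) := fun i j => by simpa using (hpar j i).sub (hpar i i)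
  have hcancel := LGV.sum_sign_mul_card_eq_card_of_involution
    (fun x => LGV.positions u x (Fin.last m)) v (LGV.Nonintersecting u) (LGV.tailSwap u)
    (LGV.collisionSwap u) (fun x => (LGV.nonintersecting_tailSwap_iff x).not.2)
    (fun x _ => LGV.tailSwap_tailSwap x) (fun _ => LGV.sign_collisionSwap)
    (fun x _ => LGV.positions_tailSwap_of_ge x (Fin.le_last _))
    (fun _ hx _ => LGV.eq_one_of_nonintersecting hu hv hpar' hx)
  rw [LGV.card_nonintersecting v hu hpar', ← hcancel, Matrix.det_apply']
  refine sum_congr rfl fun σ _ => ?_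
  simp only [Int.cast_id, LGV.card_filter_positions_last_eq_prod, Nat.cast_prod, Matrix.of_apply,
    comp_apply, LGV.card_walk_last_eq _ _ (hpar _ _)]

/-- Karlin–McGregor / Lindström–Gessel–Viennot formula: the number of `N`-tuples of
nonintersecting simple-random-walk lattice paths of length `m`, the `i`-th running
from `u i` to `v i`, equals `det ( C(m, (m + u_j - v_i)/2) )`. -/
theorem lgv_vicious_walkers (N m : ℕ) (hm : 0 < m) (u v : Fin N → ℤ)
    (hu : StrictMono u) (hv : StrictMono v)
    (hpar : ∀ i j : Fin N, Even (u i + m + v j)) :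
    (Nat.card {S : Fin N → Fin (m + 1) → ℤ //
        (∀ i, S i 0 = u i) ∧
        (∀ i, S i (Fin.last m) = v i) ∧
        (∀ i, ∀ k : Fin m, |S i k.succ - S i k.castSucc| = 1) ∧
        (∀ k : Fin (m + 1), StrictMono fun i => S i k)} : ℤ) =
      Matrix.det (Matrix.of fun i j : Fin N =>
        if 0 ≤ (m : ℤ) + u j - v i then
          (m.choose (((m : ℤ) + u j - v i) / 2).toNat : ℤ)
        else 0) :=
  lgv_vicious_walkers_general N m u v hu hv hpar
end

section
/- For positive integers m and starting/ending points 0 ≤ u_1 < ... < u_N, 0 ≤ v_1 < ... < v_N with parities matching, the number of N-tuples of nonintersecting lattice paths of length m that additionally stay nonnegative, the i-th path from u_i to v_i, equals det_{1≤i,j≤N}( C(m, (m+u_j-v_i)/2) - C(m, (m+u_j+v_i)/2 + 1) ). -/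
/-!
Induction on the length `m`. Removing the first step of every walker writes the number of
`N`-tuples of length `m + 1` as the sum, over the `2^N` first-step vectors `r`, of the numbers of
`N`-tuples of length `m` starting at `u + r`. The determinant obeys the same recursion: each
entry satisfies Pascal's rule in its start point, and the determinant is multilinear in the rows.
The terms in which the shifted start points `u + r` are not admissible vanish on both sides: two
walkers of equal parity can only collide by meeting, which gives two equal rows, and a walker
pushed to `-1` gives a zero row, by the reflection principle.
-/

open Finset

lemma Matrix.det_of_sum_rows {n α R : Type*} [Fintype n] [DecidableEq n] [CommRing R]
    (s : Finset α) (f : n → α → n → R) :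
    det (of fun i => ∑ e ∈ s, f i e) =
      ∑ r ∈ Fintype.piFinset fun _ => s, det (of fun i => f i (r i)) :=
  (detRowAlternating (R := R) (n := n)).map_sum_finset f _

lemma StrictMono.eq_of_forall_exists_eq {α : Type*} [LinearOrder α] {N : ℕ} {u v : Fin N → α}
    (hu : StrictMono u) (hv : StrictMono v) (h : ∀ j, ∃ i, u j = v i) : u = v := by
  classical
  have hcard : (univ.image v).card = N := by
    rw [card_image_of_injective _ hv.injective, card_univ, Fintype.card_fin]
  have hu_mem : ∀ j, u j ∈ univ.image v := fun j => by
    obtain ⟨i, hi⟩ := h j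
    exact hi ▸ mem_image_of_mem v (mem_univ i)
  exact (orderEmbOfFin_unique hcard hu_mem hu).trans
    (orderEmbOfFin_unique hcard (fun i => mem_image_of_mem v (mem_univ i)) hv).symm

lemma Matrix.det_of_ite_eq {α R : Type*} [LinearOrder α] [CommRing R] {N : ℕ}
    {u v : Fin N → α} (hu : StrictMono u) (hv : StrictMono v) :
    det (of fun i j => if u i = v j then (1 : R) else 0) = if u = v then 1 else 0 := by
  split_ifs with huv
  · subst huv
    convert det_one (R := R) (n := Fin N)
    ext i j
    simp [one_apply, hu.injective.eq_iff]
  · obtain ⟨j, hj⟩ : ∃ j, ∀ i, u j ≠ v i := by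
      by_contra! h
      exact huv (hu.eq_of_forall_exists_eq hv h)
    exact det_eq_zero_of_row_eq_zero j fun i => if_neg (hj i)

def stepVectors (N : ℕ) : Finset (Fin N → ℤ) := Fintype.piFinset fun _ => {-1, 1}

lemma mem_stepVectors {N : ℕ} {r : Fin N → ℤ} : r ∈ stepVectors N ↔ ∀ i, |r i| = 1 := by
  simp [stepVectors, abs_eq zero_le_one, or_comm]

/-- Equal parity makes strictly increasing points at least `2` apart. -/
lemma StrictMono.monotone_add_of_mem_stepVectors {N : ℕ} {u r : Fin N → ℤ} (hu : StrictMono u)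
    (hpar : ∀ i j, Even (u i - u j)) (hr : r ∈ stepVectors N) : Monotone (u + r) := by
  intro a b hab
  rcases hab.lt_or_eq with hab | rfl
  · have hgap := hu hab
    have hpab := Int.even_iff.1 (hpar b a)
    have := mem_stepVectors.1 hr a
    have := mem_stepVectors.1 hr b
    simp only [Pi.add_apply]
    rw [abs_eq zero_le_one] at *
    omega
  · exact le_rfl

def walkCount (m : ℕ) (d : ℤ) : ℤ :=
  if 0 ≤ (m : ℤ) + d then (m.choose (((m : ℤ) + d) / 2).toNat : ℤ) else 0

lemma walkCount_of_add_eq {m : ℕ} {d k : ℤ} (h : (m : ℤ) + d = 2 * k) :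
    walkCount m d = if 0 ≤ k then (m.choose k.toNat : ℤ) else 0 := by
  have hk : ((m : ℤ) + d) / 2 = k := by omega
  simp only [walkCount, hk]
  split_ifs <;> first | rfl | omega

lemma walkCount_succ (m : ℕ) (d : ℤ) (h : Even ((m : ℤ) + 1 + d)) :
    walkCount (m + 1) d = walkCount m (d - 1) + walkCount m (d + 1) := by
  obtain ⟨k, hk⟩ := h
  rw [walkCount_of_add_eq (k := k) (by push_cast; omega),
    walkCount_of_add_eq (k := k - 1) (by omega), walkCount_of_add_eq (k := k) (by omega)]
  rcases lt_trichotomy k 0 with hk0 | rfl | hk0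
  · rw [if_neg (by omega), if_neg (by omega), if_neg (by omega), add_zero]
  · simp
  · rw [if_pos hk0.le, if_pos (by omega), if_pos hk0.le,
      show k.toNat = (k - 1).toNat + 1 by omega, Nat.choose_succ_succ', Nat.cast_add]

lemma walkCount_neg (m : ℕ) (d : ℤ) (h : Even ((m : ℤ) + d)) :
    walkCount m (-d) = walkCount m d := by
  obtain ⟨k, hk⟩ := h
  rw [walkCount_of_add_eq (k := m - k) (by omega), walkCount_of_add_eq (k := k) (by omega)]
  rcases lt_or_ge k 0 with hk0 | hk0
  · rw [if_pos (by omega), if_neg (by omega), Nat.choose_eq_zero_of_lt (by omega), Nat.cast_zero]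
  rcases le_or_gt k m with hkm | hkm
  · rw [if_pos (by omega), if_pos hk0, show ((m : ℤ) - k).toNat = m - k.toNat by omega,
      Nat.choose_symm (by omega)]
  · rw [if_neg (by omega), if_pos hk0, Nat.choose_eq_zero_of_lt (by omega), Nat.cast_zero]

/-- Reflection principle: the walks from `x` to `y` that touch `-1` are in bijection with the
walks from `-2 - x` to `y`. -/
def wallWalkCount (m : ℕ) (x y : ℤ) : ℤ := walkCount m (x - y) - walkCount m (x + y + 2)

lemma wallWalkCount_succ (m : ℕ) (x y : ℤ) (h : Even ((m : ℤ) + 1 + x + y)) :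
    wallWalkCount (m + 1) x y = wallWalkCount m (x - 1) y + wallWalkCount m (x + 1) y := by
  have h₁ : Even ((m : ℤ) + 1 + (x - y)) := by rw [Int.even_iff] at *; omega
  have h₂ : Even ((m : ℤ) + 1 + (x + y + 2)) := by rw [Int.even_iff] at *; omega
  simp only [wallWalkCount, walkCount_succ m _ h₁, walkCount_succ m _ h₂]
  ring_nf

lemma wallWalkCount_neg_one (m : ℕ) (y : ℤ) (h : Even (-1 + (m : ℤ) + y)) :
    wallWalkCount m (-1) y = 0 := by
  rw [wallWalkCount, show -1 - y = -(-1 + y + 2) by ring, walkCount_neg]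
  · exact sub_self _
  · rw [Int.even_iff] at *; omega

lemma wallWalkCount_zero {x y : ℤ} (hx : 0 ≤ x) (hy : 0 ≤ y) (h : Even (x + y)) :
    wallWalkCount 0 x y = if x = y then 1 else 0 := by
  obtain ⟨k, hk⟩ := h
  rw [wallWalkCount, walkCount_of_add_eq (d := x - y) (k := x - k) (by push_cast; omega),
    walkCount_of_add_eq (d := x + y + 2) (k := k + 1) (by push_cast; omega),
    if_pos (show 0 ≤ k + 1 by omega),
    Nat.choose_eq_zero_of_lt (show 0 < (k + 1).toNat by omega), Nat.cast_zero, sub_zero]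
  by_cases hxy : x = y
  · rw [if_pos (by omega), if_pos hxy, show (x - k).toNat = 0 by omega, Nat.choose_zero_right,
      Nat.cast_one]
  · rw [if_neg hxy]
    split_ifs
    · rw [Nat.choose_eq_zero_of_lt (by omega), Nat.cast_zero]
    · rfl

lemma wallWalkCount_eq_choose_sub_choose (m : ℕ) {x y : ℤ} (h : 0 ≤ (m : ℤ) + x + y + 2) :
    wallWalkCount m x y =
      (if 0 ≤ (m : ℤ) + x - y then (m.choose (((m : ℤ) + x - y) / 2).toNat : ℤ) else 0) -
        (m.choose ((((m : ℤ) + x + y) / 2 + 1).toNat) : ℤ) := by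
  rw [wallWalkCount, walkCount, walkCount, ← add_sub_assoc,
    if_pos (show 0 ≤ (m : ℤ) + (x + y + 2) by omega),
    show ((m : ℤ) + (x + y + 2)) / 2 = ((m : ℤ) + x + y) / 2 + 1 by omega]

def NonnegNonintersectingWalks {N : ℕ} (m : ℕ) (u v : Fin N → ℤ) : Type :=
  {S : Fin N → Fin (m + 1) → ℤ //
    (∀ i, S i 0 = u i) ∧
    (∀ i, S i (Fin.last m) = v i) ∧
    (∀ i, ∀ k : Fin m, |S i k.succ - S i k.castSucc| = 1) ∧
    (∀ i, ∀ k : Fin (m + 1), 0 ≤ S i k) ∧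
    (∀ k : Fin (m + 1), StrictMono fun i => S i k)}

namespace NonnegNonintersectingWalks

variable {N m : ℕ} {u v : Fin N → ℤ}

lemma abs_sub_start_le (S : NonnegNonintersectingWalks m u v) (i : Fin N) (k : Fin (m + 1)) :
    |S.1 i k - u i| ≤ k := by
  induction k using Fin.induction with
  | zero => simp [S.2.1 i]
  | succ k ih =>
    have hstep := S.2.2.2.1 i k
    rw [Fin.val_succ, Nat.cast_succ]
    rw [Fin.val_castSucc] at ih
    calc |S.1 i k.succ - u i| ≤ |S.1 i k.succ - S.1 i k.castSucc| + |S.1 i k.castSucc - u i| :=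
          abs_sub_le _ _ _
      _ ≤ k + 1 := by rw [hstep]; linarith

instance : Finite (NonnegNonintersectingWalks m u v) := by
  have hbox : (Set.univ.pi fun i : Fin N => Set.univ.pi fun _ : Fin (m + 1) =>
      Set.Icc (u i - m) (u i + m)).Finite :=
    Set.Finite.pi fun i => Set.Finite.pi fun _ => Set.finite_Icc _ _
  refine Finite.of_injective (β := hbox.toFinset) (fun S => ⟨S.1, ?_⟩) fun S T h => ?_
  · simp only [Set.Finite.mem_toFinset, Set.mem_pi, Set.mem_univ, Set.mem_Icc, forall_const]
    intro i k
    have := abs_le.1 ((abs_sub_start_le S i k).trans (Nat.cast_le.2 (Nat.lt_succ_iff.1 k.2)))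
    constructor <;> linarith [this.1, this.2]
  · exact Subtype.ext (Subtype.ext_iff.1 h :)

lemma strictMono_start (S : NonnegNonintersectingWalks m u v) : StrictMono u := by
  simpa only [S.2.1] using S.2.2.2.2.2 0

lemma start_nonneg (S : NonnegNonintersectingWalks m u v) (i : Fin N) : 0 ≤ u i :=
  S.2.1 i ▸ S.2.2.2.2.1 i 0

lemma card_eq_zero (h : ¬(StrictMono u ∧ ∀ i, 0 ≤ u i)) :
    Nat.card (NonnegNonintersectingWalks m u v) = 0 :=
  have : IsEmpty (NonnegNonintersectingWalks m u v) :=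
    ⟨fun S => h ⟨S.strictMono_start, S.start_nonneg⟩⟩
  Nat.card_of_isEmpty

lemma card_zero (hu : StrictMono u) (hu0 : ∀ i, 0 ≤ u i) :
    Nat.card (NonnegNonintersectingWalks 0 u v) = if u = v then 1 else 0 := by
  split_ifs with huv
  · subst huv
    refine Nat.card_eq_one_iff_unique.2 ⟨⟨fun S T => Subtype.ext ?_⟩,
      ⟨⟨fun i _ => u i, fun _ => rfl, fun _ => rfl, fun _ k => k.elim0, fun i _ => hu0 i,
        fun _ => hu⟩⟩⟩
    funext i k
    rw [Fin.fin_one_eq_zero k, S.2.1, T.2.1]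
  · have : IsEmpty (NonnegNonintersectingWalks 0 u v) :=
      ⟨fun S => huv (funext fun i => (S.2.1 i).symm.trans (S.2.2.1 i))⟩
    exact Nat.card_of_isEmpty

def firstStep (S : NonnegNonintersectingWalks (m + 1) u v) : Fin N → ℤ := fun i => S.1 i 1 - u i

lemma firstStep_mem (S : NonnegNonintersectingWalks (m + 1) u v) :
    firstStep S ∈ stepVectors N := by
  refine mem_stepVectors.2 fun i => ?_
  simpa [firstStep, S.2.1 i] using S.2.2.2.1 i 0

def fiberFirstStepEquiv (hu : StrictMono u) (hu0 : ∀ i, 0 ≤ u i) {r : Fin N → ℤ}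
    (hr : r ∈ stepVectors N) :
    {S : NonnegNonintersectingWalks (m + 1) u v // firstStep S = r} ≃
      NonnegNonintersectingWalks m (u + r) v where
  toFun S := ⟨fun i k => S.1.1 i k.succ,
    fun i => by simp [← S.2, firstStep],
    fun i => S.1.2.2.1 i,
    fun i k => by simpa only [Fin.succ_castSucc] using S.1.2.2.2.1 i k.succ,
    fun i k => S.1.2.2.2.2.1 i k.succ,
    fun k => S.1.2.2.2.2.2 k.succ⟩
  invFun T := ⟨⟨fun i => Fin.cons (u i) (T.1 i),
    fun i => rfl,
    fun i => T.2.2.1 i,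
    fun i k => by
      cases k using Fin.cases with
      | zero => simpa [T.2.1 i] using mem_stepVectors.1 hr i
      | succ k => simpa only [← Fin.succ_castSucc, Fin.cons_succ] using T.2.2.2.1 i k,
    fun i k => by
      cases k using Fin.cases with
      | zero => exact hu0 i
      | succ k => exact T.2.2.2.2.1 i k,
    fun k => by
      cases k using Fin.cases with
      | zero => exact hu
      | succ k => exact T.2.2.2.2.2 k⟩,
    funext fun i => by simp [firstStep, T.2.1 i]⟩
  left_inv S := by
    refine Subtype.ext (Subtype.ext (funext fun i => funext fun k => ?_))
    cases k using Fin.cases with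
    | zero => exact (S.1.2.1 i).symm
    | succ k => rfl
  right_inv T := rfl

lemma card_succ (hu : StrictMono u) (hu0 : ∀ i, 0 ≤ u i) :
    Nat.card (NonnegNonintersectingWalks (m + 1) u v) =
      ∑ r ∈ stepVectors N, Nat.card (NonnegNonintersectingWalks m (u + r) v) := by
  let f (S : NonnegNonintersectingWalks (m + 1) u v) : stepVectors N := ⟨_, firstStep_mem S⟩
  calc Nat.card (NonnegNonintersectingWalks (m + 1) u v)
      = Nat.card (Σ r : stepVectors N, {S // f S = r}) :=
        Nat.card_congr (Equiv.sigmaFiberEquiv f).symm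
    _ = ∑ r : stepVectors N, Nat.card {S // f S = r} := Nat.card_sigma
    _ = ∑ r : stepVectors N, Nat.card (NonnegNonintersectingWalks m (u + r.1) v) :=
        Finset.sum_congr rfl fun r _ => Nat.card_congr
          ((Equiv.subtypeEquivRight fun _ => Subtype.ext_iff).trans
            (fiberFirstStepEquiv hu hu0 r.2))
    _ = _ := Finset.sum_coe_sort (stepVectors N) fun r =>
          Nat.card (NonnegNonintersectingWalks m (u + r) v)

end NonnegNonintersectingWalks

def wallWalkMatrix {N : ℕ} (m : ℕ) (u v : Fin N → ℤ) : Matrix (Fin N) (Fin N) ℤ :=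
  Matrix.of fun i j => wallWalkCount m (u i) (v j)

section wallWalkMatrix

open Matrix

variable {N m : ℕ} {u v : Fin N → ℤ}

lemma det_wallWalkMatrix_succ (hpar : ∀ i j, Even (u i + (m + 1 : ℕ) + v j)) :
    det (wallWalkMatrix (m + 1) u v) =
      ∑ r ∈ stepVectors N, det (wallWalkMatrix m (u + r) v) := by
  have hrows : wallWalkMatrix (m + 1) u v =
      of fun i => ∑ e ∈ ({-1, 1} : Finset ℤ), fun j => wallWalkCount m (u i + e) (v j) := by
    ext i j
    have h : Even ((m : ℤ) + 1 + u i + v j) := by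
      have := hpar i j; push_cast at this; rw [Int.even_iff] at *; omega
    simp only [wallWalkMatrix, of_apply, wallWalkCount_succ m _ _ h,
      sum_pair (by norm_num : (-1 : ℤ) ≠ 1), Pi.add_apply, sub_eq_add_neg]
  rw [hrows, det_of_sum_rows]
  rfl

lemma det_wallWalkMatrix_eq_zero_of_not_injective (hu : ¬Function.Injective u) :
    det (wallWalkMatrix m u v) = 0 := by
  obtain ⟨a, b, hab, hne⟩ : ∃ a b, u a = u b ∧ a ≠ b := by
    simpa [Function.Injective] using hu
  exact det_zero_of_row_eq hne (funext fun j => by simp only [wallWalkMatrix, of_apply, hab])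

lemma det_wallWalkMatrix_eq_zero_of_eq_neg_one {i : Fin N} (hi : u i = -1)
    (hpar : ∀ j, Even (u i + m + v j)) : det (wallWalkMatrix m u v) = 0 :=
  det_eq_zero_of_row_eq_zero i fun j => by
    simp only [wallWalkMatrix, of_apply, hi]
    exact wallWalkCount_neg_one m (v j) (hi ▸ hpar j)

lemma det_wallWalkMatrix_zero (hu : StrictMono u) (hv : StrictMono v) (hu0 : ∀ i, 0 ≤ u i)
    (hv0 : ∀ j, 0 ≤ v j) (hpar : ∀ i j, Even (u i + (0 : ℕ) + v j)) :
    det (wallWalkMatrix 0 u v) = if u = v then 1 else 0 := by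
  have hdiag : wallWalkMatrix 0 u v = of fun i j => if u i = v j then 1 else 0 := by
    ext i j
    exact wallWalkCount_zero (hu0 i) (hv0 j) (by simpa using hpar i j)
  rw [hdiag, det_of_ite_eq hu hv]

end wallWalkMatrix

open Matrix NonnegNonintersectingWalks in
theorem card_nonnegNonintersectingWalks_eq_det {N : ℕ} {v : Fin N → ℤ} (hv : StrictMono v)
    (hv0 : ∀ j, 0 ≤ v j) (m : ℕ) {u : Fin N → ℤ} (hu : StrictMono u) (hu0 : ∀ i, 0 ≤ u i)
    (hpar : ∀ i j, Even (u i + m + v j)) :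
    (Nat.card (NonnegNonintersectingWalks m u v) : ℤ) = det (wallWalkMatrix m u v) := by
  induction m generalizing u with
  | zero =>
    rw [card_zero hu hu0, det_wallWalkMatrix_zero hu hv hu0 hv0 hpar]
    split_ifs <;> rfl
  | succ m ih =>
    rw [card_succ hu hu0, det_wallWalkMatrix_succ hpar, Nat.cast_sum]
    refine sum_congr rfl fun r hr => ?_
    have hstep : ∀ i, r i = -1 ∨ r i = 1 := fun i => by
      have := mem_stepVectors.1 hr i
      rwa [abs_eq zero_le_one, or_comm] at this
    have hpar' : ∀ i j, Even ((u + r) i + m + v j) := fun i j => by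
      have := hpar i j
      rw [Pi.add_apply, Int.even_iff] at *
      push_cast at this ⊢
      rcases hstep i with h | h <;> omega
    by_cases hinj : Function.Injective (u + r)
    swap
    · rw [card_eq_zero fun h => hinj h.1.injective,
        det_wallWalkMatrix_eq_zero_of_not_injective hinj, Nat.cast_zero]
    have hgap : ∀ a b, Even (u a - u b) := fun a b => by
      have := hpar a a; have := hpar b a
      rw [Int.even_iff] at *; omega
    have hmono := (hu.monotone_add_of_mem_stepVectors hgap hr).strictMono_of_injective hinj
    by_cases hnn : ∀ i, 0 ≤ (u + r) i
    · exact ih hmono hnn hpar'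
    · obtain ⟨i, hi⟩ := not_forall.1 hnn
      have hwall : (u + r) i = -1 := by
        have := hu0 i
        simp only [Pi.add_apply] at hi ⊢
        rcases hstep i with h | h <;> omega
      rw [card_eq_zero fun h => hi (h.2 i),
        det_wallWalkMatrix_eq_zero_of_eq_neg_one hwall (hpar' i), Nat.cast_zero]

theorem lgv_vicious_walkers_wall_general (N m : ℕ) (u v : Fin N → ℤ)
    (hu : StrictMono u) (hv : StrictMono v) (hu0 : ∀ i, 0 ≤ u i) (hv0 : ∀ i, 0 ≤ v i)
    (hpar : ∀ i j : Fin N, Even (u i + m + v j)) :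
    (Nat.card {S : Fin N → Fin (m + 1) → ℤ //
        (∀ i, S i 0 = u i) ∧
        (∀ i, S i (Fin.last m) = v i) ∧
        (∀ i, ∀ k : Fin m, |S i k.succ - S i k.castSucc| = 1) ∧
        (∀ i, ∀ k : Fin (m + 1), 0 ≤ S i k) ∧
        (∀ k : Fin (m + 1), StrictMono fun i => S i k)} : ℤ) =
      Matrix.det (Matrix.of fun i j : Fin N =>
        (if 0 ≤ (m : ℤ) + u j - v i then
            (m.choose (((m : ℤ) + u j - v i) / 2).toNat : ℤ)
          else 0) -
        (m.choose ((((m : ℤ) + u j + v i) / 2 + 1).toNat) : ℤ)) := by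
  calc _ = Matrix.det (wallWalkMatrix m u v) :=
        card_nonnegNonintersectingWalks_eq_det hv hv0 m hu hu0 hpar
    _ = Matrix.det (wallWalkMatrix m u v).transpose := (Matrix.det_transpose _).symm
    _ = _ := by
      congr 1
      ext i j
      exact wallWalkCount_eq_choose_sub_choose m (by linarith [hu0 j, hv0 i])

/-- Reflection-extended Lindström–Gessel–Viennot formula: the number of `N`-tuples of
nonintersecting simple-random-walk lattice paths of length `m` that stay nonnegative,
the `i`-th running from `u i` to `v i`, equals
`det ( C(m, (m + u_j - v_i)/2) - C(m, (m + u_j + v_i)/2 + 1) )`. -/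
theorem lgv_vicious_walkers_wall (N m : ℕ) (hm : 0 < m) (u v : Fin N → ℤ)
    (hu : StrictMono u) (hv : StrictMono v) (hu0 : ∀ i, 0 ≤ u i) (hv0 : ∀ i, 0 ≤ v i)
    (hpar : ∀ i j : Fin N, Even (u i + m + v j)) :
    (Nat.card {S : Fin N → Fin (m + 1) → ℤ //
        (∀ i, S i 0 = u i) ∧
        (∀ i, S i (Fin.last m) = v i) ∧
        (∀ i, ∀ k : Fin m, |S i k.succ - S i k.castSucc| = 1) ∧
        (∀ i, ∀ k : Fin (m + 1), 0 ≤ S i k) ∧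
        (∀ k : Fin (m + 1), StrictMono fun i => S i k)} : ℤ) =
      Matrix.det (Matrix.of fun i j : Fin N =>
        (if 0 ≤ (m : ℤ) + u j - v i then
            (m.choose (((m : ℤ) + u j - v i) / 2).toNat : ℤ)
          else 0) -
        (m.choose ((((m : ℤ) + u j + v i) / 2 + 1).toNat) : ℤ)) :=
  lgv_vicious_walkers_wall_general N m u v hu hv hu0 hv0 hpar
end

section
/- Stirling-type asymptotics: for fixed real v, as ℓ → ∞ through positive integers, (2ℓ)! / ((ℓ-v)!(ℓ+v)!) = (ℓπ)^{-1/2} 2^{2ℓ} (1 - v²/ℓ²)^{-ℓ-1/2} ((1-v/ℓ)/(1+v/ℓ))^v (1 + O(1/ℓ)), where factorials of non-integers are interpreted via the Gamma function. -/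
/-!
Legendre's duplication formula rewrites the left-hand side as
`(xπ)^(-1/2) 2^(2x) R_{1/2}(x) / (R_v(x+1) R_{-v}(x+1))` with `R_w(x) = Γ(x+w) / (Γ(x) x^w)`,
while the factor `(1 - v²/x²)^(-x-1/2) ((1-v/x)/(1+v/x))^v` is itself `1 + O(1/x)`.
So everything reduces to `R_w(x) = 1 + O(1/x)` for each real `w`. For `0 ≤ w ≤ 1` this follows
from Wendel's bounds `x/(x+w) ≤ R_w(x) ≤ 1`, two instances of the log-convexity of `Γ`; the
recursion `R_{w+1}(x) = R_w(x) (1 + w/x)` carries it to every `w`.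
-/

open Real Filter Topology Asymptotics

theorem Gamma_mul_add_mul_le_rpow_Gamma_mul_rpow_Gamma_of_nonneg {s t a b : ℝ} (hs : 0 < s)
    (ht : 0 < t) (ha : 0 ≤ a) (hb : 0 ≤ b) (hab : a + b = 1) :
    Gamma (a * s + b * t) ≤ Gamma s ^ a * Gamma t ^ b := by
  rcases ha.eq_or_lt with rfl | ha
  · obtain rfl : b = 1 := by linarith
    simp
  rcases hb.eq_or_lt with rfl | hb
  · obtain rfl : a = 1 := by linarith
    simp
  exact Gamma_mul_add_mul_le_rpow_Gamma_mul_rpow_Gamma hs ht ha hb hab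

noncomputable def gammaShiftRatio (w x : ℝ) : ℝ := Gamma (x + w) / (Gamma x * x ^ w)

section Wendel

variable {x w : ℝ}

theorem Gamma_add_le_Gamma_mul_rpow (hx : 0 < x) (hw₀ : 0 ≤ w) (hw₁ : w ≤ 1) :
    Gamma (x + w) ≤ Gamma x * x ^ w := by
  have hΓ := Gamma_pos_of_pos hx
  calc Gamma (x + w) = Gamma ((1 - w) * x + w * (x + 1)) := by ring_nf
    _ ≤ Gamma x ^ (1 - w) * Gamma (x + 1) ^ w :=
      Gamma_mul_add_mul_le_rpow_Gamma_mul_rpow_Gamma_of_nonneg hx (by linarith) (by linarith) hw₀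
        (by ring)
    _ = Gamma x * x ^ w := by
      rw [Gamma_add_one hx.ne', mul_rpow hx.le hΓ.le, ← mul_assoc, mul_comm _ (x ^ w), mul_assoc,
        ← rpow_add hΓ, sub_add_cancel, rpow_one, mul_comm]

theorem mul_Gamma_le_Gamma_add_mul_rpow (hx : 0 < x) (hw₀ : 0 ≤ w) (hw₁ : w ≤ 1) :
    x * Gamma x ≤ Gamma (x + w) * (x + w) ^ (1 - w) := by
  have hxw : 0 < x + w := by linarith
  have hΓ := Gamma_pos_of_pos hxw
  calc x * Gamma x = Gamma (w * (x + w) + (1 - w) * (x + w + 1)) := by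
        rw [← Gamma_add_one hx.ne']; ring_nf
    _ ≤ Gamma (x + w) ^ w * Gamma (x + w + 1) ^ (1 - w) :=
      Gamma_mul_add_mul_le_rpow_Gamma_mul_rpow_Gamma_of_nonneg hxw (by linarith) hw₀
        (by linarith) (by ring)
    _ = Gamma (x + w) * (x + w) ^ (1 - w) := by
      rw [Gamma_add_one hxw.ne', mul_rpow hxw.le hΓ.le, mul_left_comm, ← rpow_add hΓ,
        add_sub_cancel, rpow_one, mul_comm]

theorem div_add_le_gammaShiftRatio (hx : 0 < x) (hw₀ : 0 ≤ w) (hw₁ : w ≤ 1) :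
    x / (x + w) ≤ gammaShiftRatio w x := by
  have hxw : 0 < x + w := by linarith
  have key : x * Gamma x * (x + w) ^ w ≤ Gamma (x + w) * (x + w) := by
    have := mul_le_mul_of_nonneg_right (mul_Gamma_le_Gamma_add_mul_rpow hx hw₀ hw₁)
      (rpow_nonneg hxw.le w)
    rwa [mul_assoc (Gamma (x + w)), ← rpow_add hxw, sub_add_cancel, rpow_one] at this
  rw [gammaShiftRatio, le_div_iff₀ (by have := Gamma_pos_of_pos hx; positivity)]
  calc x / (x + w) * (Gamma x * x ^ w) ≤ x / (x + w) * (Gamma x * (x + w) ^ w) := by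
        gcongr; linarith
    _ = x * Gamma x * (x + w) ^ w / (x + w) := by ring
    _ ≤ Gamma (x + w) := by rwa [div_le_iff₀ hxw]

theorem abs_gammaShiftRatio_sub_one_le (hx : 0 < x) (hw₀ : 0 ≤ w) (hw₁ : w ≤ 1) :
    |gammaShiftRatio w x - 1| ≤ w / x := by
  have hupper : gammaShiftRatio w x ≤ 1 :=
    div_le_one_of_le₀ (Gamma_add_le_Gamma_mul_rpow hx hw₀ hw₁)
      (by have := Gamma_pos_of_pos hx; positivity)
  have hlower : 1 - w / x ≤ x / (x + w) := by
    calc 1 - w / x ≤ 1 - w / (x + w) := by gcongr; linarith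
      _ = x / (x + w) := by field_simp; ring
  rw [abs_sub_le_iff]
  constructor
  · linarith [div_nonneg hw₀ hx.le]
  · linarith [div_add_le_gammaShiftRatio hx hw₀ hw₁]

theorem gammaShiftRatio_add_one (hx : 0 < x) (hxw : x + w ≠ 0) :
    gammaShiftRatio (w + 1) x = gammaShiftRatio w x * (1 + w * x⁻¹) := by
  have hΓ := (Gamma_pos_of_pos hx).ne'
  rw [gammaShiftRatio, gammaShiftRatio, ← add_assoc, Gamma_add_one hxw, rpow_add_one hx.ne']
  field_simp

end Wendel

section OneAddBigO

variable {α : Type*} {l : Filter α} {f h g : α → ℝ}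

theorem isBigO_mul_sub_one (hf : (fun x => f x - 1) =O[l] g) (hh : (fun x => h x - 1) =O[l] g)
    (hg : g =O[l] (fun _ => (1 : ℝ))) : (fun x => f x * h x - 1) =O[l] g := by
  have hgg : (fun x => g x * g x) =O[l] g := by simpa using (isBigO_refl g l).mul hg
  have := ((hf.mul hh).trans hgg).add hf |>.add hh
  refine this.congr_left fun x => ?_
  ring

theorem isBigO_inv_sub_one (hf : (fun x => f x - 1) =O[l] g) (hg : Tendsto g l (𝓝 0)) :
    (fun x => (f x)⁻¹ - 1) =O[l] g := by
  have hf₁ : Tendsto f l (𝓝 1) := by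
    simpa using (hf.trans_tendsto hg).add_const 1
  have hinv : Tendsto (fun x => (f x)⁻¹) l (𝓝 1) := by simpa using hf₁.inv₀ one_ne_zero
  have := hf.neg_left.mul (hinv.isBigO_one ℝ)
  simp only [mul_one] at this
  refine this.congr' ?_ EventuallyEq.rfl
  filter_upwards [hf₁.eventually_ne one_ne_zero] with x hx
  field_simp
  ring

theorem isBigO_one_add_mul_sub_one (c : ℝ) : (fun x => (1 + c * g x) - 1) =O[l] g := by
  simpa using (isBigO_refl g l).const_mul_left c

theorem isBigO_rpow_sub_one {u a : α → ℝ} (hu : (fun x => u x - 1) =O[l] g)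
    (hg : Tendsto g l (𝓝 0)) (hag : Tendsto (fun x => a x * g x) l (𝓝 0)) :
    (fun x => u x ^ a x - 1) =O[l] (fun x => a x * g x) := by
  have hu₁ : Tendsto u l (𝓝 1) := by simpa using (hu.trans_tendsto hg).add_const 1
  have hlog : (fun x => log (u x)) =O[l] g := by
    simpa [Function.comp_def] using
      ((hasDerivAt_log one_ne_zero).isBigO_sub.comp_tendsto hu₁).trans hu
  have hs : (fun x => a x * log (u x)) =O[l] (fun x => a x * g x) := (isBigO_refl a l).mul hlog
  have hexp : (fun x => exp (a x * log (u x)) - 1) =O[l] (fun x => a x * log (u x)) := by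
    simpa [Function.comp_def] using
      (hasDerivAt_exp 0).isBigO_sub.comp_tendsto (hs.trans_tendsto hag)
  refine (hexp.trans hs).congr' ?_ EventuallyEq.rfl
  filter_upwards [hu₁.eventually (eventually_gt_nhds one_pos)] with x hx
  rw [rpow_def_of_pos hx, mul_comm]

end OneAddBigO

theorem exists_nat_abs_le_div_of_isBigO {r : ℝ → ℝ} {p : ℝ → Prop}
    (hr : r =O[atTop] (fun x => x⁻¹)) (hp : ∀ᶠ x in atTop, p x) :
    ∃ C > 0, ∃ L : ℕ, ∀ ℓ : ℕ, L ≤ ℓ → |r ℓ| ≤ C / ℓ ∧ p ℓ := by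
  obtain ⟨C, hC, hCr⟩ := hr.exists_pos
  obtain ⟨L, hL⟩ :=
    eventually_atTop.mp (tendsto_natCast_atTop_atTop.eventually (hCr.bound.and hp))
  exact ⟨C, hC, L, fun ℓ hℓ => by simpa [div_eq_mul_inv] using hL ℓ hℓ⟩

theorem gammaShiftRatio_sub_one_isBigO (w : ℝ) :
    (fun x => gammaShiftRatio w x - 1) =O[atTop] (fun x => x⁻¹) := by
  let P : ℝ → Prop := fun w => (fun x => gammaShiftRatio w x - 1) =O[atTop] (fun x => x⁻¹)
  have base {w : ℝ} (hw₀ : 0 ≤ w) (hw₁ : w ≤ 1) : P w := by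
    refine IsBigO.of_bound w ?_
    filter_upwards [eventually_gt_atTop 0] with x hx
    simpa [abs_of_pos hx, div_eq_mul_inv] using abs_gammaShiftRatio_sub_one_le hx hw₀ hw₁
  have shift (w : ℝ) : P w ↔ P (w + 1) := by
    have hg := tendsto_inv_atTop_zero (𝕜 := ℝ)
    have hlin := isBigO_one_add_mul_sub_one (l := atTop) (g := fun x : ℝ => x⁻¹) w
    have hdom : ∀ᶠ x : ℝ in atTop, 0 < x ∧ 0 < x + w := by
      filter_upwards [eventually_gt_atTop 0, eventually_gt_atTop (-w)] with x hx hxw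
      exact ⟨hx, by linarith⟩
    constructor
    · intro h
      refine (isBigO_mul_sub_one h hlin (hg.isBigO_one ℝ)).congr' ?_ EventuallyEq.rfl
      filter_upwards [hdom] with x ⟨hx, hxw⟩
      rw [gammaShiftRatio_add_one hx hxw.ne']
    · intro h
      refine (isBigO_mul_sub_one h (isBigO_inv_sub_one hlin hg) (hg.isBigO_one ℝ)).congr' ?_
        EventuallyEq.rfl
      filter_upwards [hdom] with x ⟨hx, hxw⟩
      have : 1 + w * x⁻¹ ≠ 0 := by
        rw [← div_eq_mul_inv, one_add_div hx.ne']; exact (div_pos hxw hx).ne'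
      rw [gammaShiftRatio_add_one hx hxw.ne', mul_inv_cancel_right₀ this]
  have shifted (n : ℤ) : P (Int.fract w + n) := by
    induction n using Int.induction_on with
    | zero => simpa using base (Int.fract_nonneg w) (Int.fract_lt_one w).le
    | succ n ih => simpa [add_assoc] using (shift _).mp ih
    | pred n ih =>
      refine (shift _).mpr ?_
      rwa [show Int.fract w + ((-n - 1 : ℤ) : ℝ) + 1 = Int.fract w + ((-n : ℤ) : ℝ) by
        push_cast; ring]
  simpa using shifted ⌊w⌋

theorem gammaShiftRatio_comp_add_one_sub_one_isBigO (w : ℝ) :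
    (fun x => gammaShiftRatio w (x + 1) - 1) =O[atTop] (fun x => x⁻¹) := by
  have hinv : (fun x : ℝ => (x + 1)⁻¹) =O[atTop] (fun x => x⁻¹) := by
    refine IsBigO.of_bound 1 ?_
    filter_upwards [eventually_gt_atTop 0] with x hx
    rw [one_mul, norm_inv, norm_inv, Real.norm_of_nonneg hx.le, Real.norm_of_nonneg (by linarith)]
    exact inv_anti₀ hx (by linarith)
  exact ((gammaShiftRatio_sub_one_isBigO w).comp_tendsto
    (tendsto_atTop_add_const_right _ 1 tendsto_id)).trans hinv

theorem one_sub_sq_div_rpow_mul_div_rpow_sub_one_isBigO (v : ℝ) :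
    (fun x : ℝ => (1 - v ^ 2 / x ^ 2) ^ (-x - 1 / 2) * ((1 - v / x) / (1 + v / x)) ^ v - 1)
      =O[atTop] (fun x => x⁻¹) := by
  have hg : Tendsto (fun x : ℝ => x⁻¹) atTop (𝓝 0) := tendsto_inv_atTop_zero
  have hg₂ : Tendsto (fun x : ℝ => x⁻¹ ^ 2) atTop (𝓝 0) := by simpa using hg.pow 2
  have hpow : (fun x : ℝ => (-x - 1 / 2) * x⁻¹ ^ 2) =O[atTop] (fun x => x⁻¹) := by
    have hc : Tendsto (fun x : ℝ => -1 - 2⁻¹ * x⁻¹) atTop (𝓝 (-1)) := by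
      simpa using (hg.const_mul 2⁻¹).const_sub (-1)
    refine ((hc.isBigO_one ℝ).mul (isBigO_refl _ _)).congr' ?_
      (Eventually.of_forall fun x => one_mul _)
    filter_upwards [eventually_ne_atTop 0] with x hx
    field_simp
  have hfirst := isBigO_rpow_sub_one (u := fun x : ℝ => 1 - v ^ 2 / x ^ 2)
    (a := fun x : ℝ => -x - 1 / 2)
    ((isBigO_one_add_mul_sub_one (-v ^ 2) (g := fun x : ℝ => x⁻¹ ^ 2) (l := atTop)).congr_left
      fun x => by ring) hg₂ (hpow.trans_tendsto hg)
  have hquot : (fun x : ℝ => (1 - v / x) / (1 + v / x) - 1) =O[atTop] (fun x => x⁻¹) :=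
    (isBigO_mul_sub_one (isBigO_one_add_mul_sub_one (-v))
      (isBigO_inv_sub_one (isBigO_one_add_mul_sub_one v) hg) (hg.isBigO_one ℝ)).congr_left
      fun x => by ring
  have hsecond := isBigO_rpow_sub_one (a := fun _ => v) hquot hg (by simpa using hg.const_mul v)
  exact isBigO_mul_sub_one (hfirst.trans hpow) (hsecond.trans ((isBigO_refl _ _).const_mul_left v))
    (hg.isBigO_one ℝ)

theorem Gamma_two_mul_add_one_div_Gamma_mul_Gamma_eq {v x : ℝ} (hx : |v| < x) :
    Gamma (2 * x + 1) / (Gamma (x - v + 1) * Gamma (x + v + 1)) =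
      (x * π) ^ (-(1 : ℝ) / 2) * 2 ^ (2 * x) *
        (gammaShiftRatio (1 / 2) x /
          (gammaShiftRatio v (x + 1) * gammaShiftRatio (-v) (x + 1))) := by
  obtain ⟨hvx₁, hvx₂⟩ := abs_lt.mp hx
  have hx₀ : 0 < x := by linarith
  have hΓ := Gamma_pos_of_pos hx₀
  have hΓadd := Gamma_pos_of_pos (show 0 < x + v + 1 by linarith)
  have hΓsub := Gamma_pos_of_pos (show 0 < x - v + 1 by linarith)
  have hduplication :
      Gamma (2 * x + 1) * √π = 2 ^ (2 * x) * (Gamma (x + 1 / 2) * (x * Gamma x)) := by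
    have := Gamma_mul_Gamma_add_half (x + 1 / 2)
    rw [add_assoc, add_halves, Gamma_add_one hx₀.ne', show 2 * (x + 1 / 2) = 2 * x + 1 by ring,
      show 1 - (2 * x + 1) = -(2 * x) by ring, rpow_neg zero_le_two] at this
    rw [this]
    field_simp
  have hπ : (x * π) ^ (-(1 : ℝ) / 2) = (√x * √π)⁻¹ := by
    rw [neg_div, rpow_neg (by positivity), mul_rpow hx₀.le pi_pos.le, ← sqrt_eq_rpow,
      ← sqrt_eq_rpow]
  simp only [gammaShiftRatio, Gamma_add_one hx₀.ne', rpow_neg (by linarith : 0 ≤ x + 1), hπ,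
    ← sqrt_eq_rpow]
  rw [show x + 1 + v = x + v + 1 by ring, show x + 1 + -v = x - v + 1 by ring]
  field_simp
  rw [sq_sqrt hx₀.le, show (2 * x + 1) / 2 = x + 1 / 2 by ring]
  linear_combination x * hduplication

theorem Gamma_two_mul_add_one_div_Gamma_mul_Gamma_div_sub_one_isBigO (v : ℝ) :
    (fun x : ℝ => Gamma (2 * x + 1) / (Gamma (x - v + 1) * Gamma (x + v + 1)) /
        ((x * π) ^ (-(1 : ℝ) / 2) * 2 ^ (2 * x) *
          ((1 - v ^ 2 / x ^ 2) ^ (-x - 1 / 2) * ((1 - v / x) / (1 + v / x)) ^ v)) - 1)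
      =O[atTop] (fun x => x⁻¹) := by
  have hg : Tendsto (fun x : ℝ => x⁻¹) atTop (𝓝 0) := tendsto_inv_atTop_zero
  have hg₁ := hg.isBigO_one ℝ
  have hdenominator := isBigO_mul_sub_one (isBigO_mul_sub_one
    (gammaShiftRatio_comp_add_one_sub_one_isBigO v)
    (gammaShiftRatio_comp_add_one_sub_one_isBigO (-v)) hg₁)
    (one_sub_sq_div_rpow_mul_div_rpow_sub_one_isBigO v) hg₁
  refine (isBigO_mul_sub_one (gammaShiftRatio_sub_one_isBigO (1 / 2))
    (isBigO_inv_sub_one hdenominator hg) hg₁).congr' ?_ EventuallyEq.rfl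
  filter_upwards [eventually_gt_atTop |v|] with x hx
  have hx₀ : 0 < x := (abs_nonneg v).trans_lt hx
  rw [Gamma_two_mul_add_one_div_Gamma_mul_Gamma_eq hx, mul_div_mul_left _ _ (by positivity),
    div_div, div_eq_mul_inv (gammaShiftRatio _ x)]

/-- Stirling-type asymptotics: for fixed real `v`, as `ℓ → ∞`,
`(2ℓ)!/((ℓ-v)!(ℓ+v)!) = (ℓπ)^{-1/2} 2^{2ℓ} (1-v²/ℓ²)^{-ℓ-1/2} ((1-v/ℓ)/(1+v/ℓ))^v (1+O(1/ℓ))`,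
where `x! = Γ(x+1)`. -/
theorem binomial_ratio_asymptotics (v : ℝ) :
    ∃ C > (0 : ℝ), ∃ L : ℕ, ∀ ℓ : ℕ, L ≤ ℓ →
      ∃ r : ℝ, |r| ≤ C / ℓ ∧
        Real.Gamma (2 * ℓ + 1) / (Real.Gamma (ℓ - v + 1) * Real.Gamma (ℓ + v + 1)) =
          ((ℓ : ℝ) * π) ^ (-(1 : ℝ) / 2) * 2 ^ (2 * (ℓ : ℝ)) *
            (1 - v ^ 2 / (ℓ : ℝ) ^ 2) ^ (-(ℓ : ℝ) - 1 / 2) *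
            ((1 - v / ℓ) / (1 + v / ℓ)) ^ v * (1 + r) := by
  have hne : ∀ᶠ x : ℝ in atTop, (x * π) ^ (-(1 : ℝ) / 2) * 2 ^ (2 * x) *
      ((1 - v ^ 2 / x ^ 2) ^ (-x - 1 / 2) * ((1 - v / x) / (1 + v / x)) ^ v) ≠ 0 := by
    filter_upwards [eventually_gt_atTop |v|] with x hx
    obtain ⟨hvx₁, hvx₂⟩ := abs_lt.mp hx
    have hx₀ : 0 < x := by linarith
    have h₁ : 0 < 1 - v / x := by rw [sub_pos, div_lt_one hx₀]; exact hvx₂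
    have h₂ : 0 < 1 + v / x := by
      rw [← sub_neg_eq_add, sub_pos, ← neg_div, div_lt_one hx₀]; linarith
    rw [show 1 - v ^ 2 / x ^ 2 = (1 - v / x) * (1 + v / x) by ring]
    exact mul_ne_zero (by positivity)
      (mul_pos (rpow_pos_of_pos (mul_pos h₁ h₂) _) (rpow_pos_of_pos (div_pos h₁ h₂) v)).ne'
  obtain ⟨C, hC, L, hL⟩ := exists_nat_abs_le_div_of_isBigO
    (Gamma_two_mul_add_one_div_Gamma_mul_Gamma_div_sub_one_isBigO v) hne
  refine ⟨C, hC, L, fun ℓ hℓ => ⟨_, (hL ℓ hℓ).1, ?_⟩⟩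
  rw [add_sub_cancel, mul_assoc _ (_ ^ (-(ℓ : ℝ) - 1 / 2)), mul_div_cancel₀ _ (hL ℓ hℓ).2]
end
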